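/- arXiv:1008.0264 — 6 statements merged into one kernel-verified Lean document; each statement's English description precedes it below -/
import Mathlib

section
/- The Hausdorff dimension of a self-similar ultrametric Cantor set equals the abscissa of convergence of its zeta function; explicitly, dim_H(Π_∞, ρ) = log(Λ)/(−log α), where Λ is the Perron–Frobenius eigenvalue of the adjacency matrix and α the contraction parameter of the ultrametric. -/
/-- The space of infinite paths of a stationary Bratteli diagram with edge set `Ed`,
vertex set `V`, and source/range maps `σ, τ : Ed → V`: sequences of composable edges. -/
def SPath (Ed : Type) {V : Type} (σ τ : Ed → V) : Type :=
  {x : ℕ → Ed // ∀ n, τ (x n) = σ (x (n + 1))}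

/-- The length of the longest common prefix of two infinite paths. -/
noncomputable def slcp {Ed V : Type} {σ τ : Ed → V} (x y : SPath Ed σ τ) : ℕ :=
  sInf {n | x.1 n ≠ y.1 n}

/-!
Let `u > 0` be the Perron–Frobenius eigenvector and `d = log Λ / (-log α)`, so that `Λ αᵈ = 1`.
Comparing with `u`, the number of words of length `n` readable along paths is of order `Λⁿ`,
and two paths that first disagree at position `n` are `≍ αⁿ` apart.

Upper bound: the cylinders of length `n` cover the space by `≲ Λⁿ` sets of diameter `≲ αⁿ`,
so `μH[d]` is finite.

Lower bound: by primitivity the `≳ Λⁿ` words of length `n` starting at a vertex `w` can be closed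
up into `N ≳ Λⁿ` distinct loops at `w` of a common length `K = n + k₀`. Concatenating loops
freely embeds the full shift on `N` symbols, and reading the sequence of loops as base-`N`
digits is Hölder of exponent `log N / (K · (-log α))` onto `[0, 1]`. These exponents tend to `d`.
-/

open Filter Topology Finset
open scoped NNReal ENNReal

lemma rpow_log_div_neg_log {α Λ : ℝ} (hα₀ : 0 < α) (hα₁ : α ≠ 1) (hΛ : 0 < Λ) :
    α ^ (Real.log Λ / -Real.log α) = Λ⁻¹ := by
  have hlog : Real.log α ≠ 0 := Real.log_ne_zero_of_pos_of_ne_one hα₀ hα₁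
  rw [Real.rpow_def_of_pos hα₀, mul_div_assoc', mul_comm, mul_div_assoc, div_neg, div_self hlog,
    mul_neg_one, Real.exp_neg, Real.exp_log hΛ]

lemma HolderOnWith.of_dist_le {X Y : Type*} [PseudoMetricSpace X] [PseudoMetricSpace Y]
    {C r : ℝ≥0} {f : X → Y} {s : Set X}
    (h : ∀ x ∈ s, ∀ y ∈ s, dist (f x) (f y) ≤ C * dist x y ^ (r : ℝ)) :
    HolderOnWith C r f s := by
  intro x hx y hy
  rw [edist_dist, edist_dist, ← ENNReal.ofReal_coe_nnreal, ENNReal.ofReal_rpow_of_nonneg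
    dist_nonneg r.coe_nonneg, ← ENNReal.ofReal_mul C.coe_nonneg]
  exact ENNReal.ofReal_le_ofReal (h x hx y hy)

lemma le_dimH_of_holderOnWith_Icc_subset {X : Type*} [EMetricSpace X] {C r : ℝ≥0} {f : X → ℝ}
    {s : Set X} (hf : HolderOnWith C r f s) (hr : 0 < r) (hs : Set.Icc 0 1 ⊆ f '' s) :
    (r : ℝ≥0∞) ≤ dimH s := by
  have h : (1 : ℝ≥0∞) ≤ dimH s / r :=
    calc (1 : ℝ≥0∞) = dimH (Set.Icc (0 : ℝ) 1) := by
          rw [Real.dimH_of_nonempty_interior (by simp), Module.finrank_self, Nat.cast_one]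
    _ ≤ dimH (f '' s) := dimH_mono hs
    _ ≤ dimH s / r := hf.dimH_image_le hr
  rwa [ENNReal.le_div_iff_mul_le (Or.inl (by exact_mod_cast hr.ne')) (Or.inl ENNReal.coe_ne_top),
    one_mul] at h

lemma dimH_le_of_covers {X : Type*} [EMetricSpace X] {ι : ℕ → Type*} [∀ n, Fintype (ι n)]
    {s : Set X} (t : ∀ n, ι n → Set X) (hcover : ∀ n, s ⊆ ⋃ i, t n i) {r : ℕ → ℝ≥0∞}
    (hr : Tendsto r atTop (𝓝 0)) (hdiam : ∀ n i, Metric.ediam (t n i) ≤ r n) {d : ℝ}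
    (hd : 0 ≤ d) {C : ℝ≥0∞} (hC : C ≠ ∞) (hsum : ∀ n, Fintype.card (ι n) * r n ^ d ≤ C) :
    dimH s ≤ ENNReal.ofReal d := by
  borelize X
  refine dimH_le_of_hausdorffMeasure_ne_top (ne_top_of_le_ne_top hC ?_)
  rw [Real.coe_toNNReal _ hd]
  refine (MeasureTheory.Measure.hausdorffMeasure_le_liminf_sum d _ r hr t (.of_forall hdiam)
    (.of_forall hcover)).trans (liminf_le_of_frequently_le' (.of_forall fun n => ?_))
  calc ∑ i, Metric.ediam (t n i) ^ d ≤ ∑ _i : ι n, r n ^ d :=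
        sum_le_sum fun i _ => ENNReal.rpow_le_rpow (hdiam n i) hd
  _ = Fintype.card (ι n) * r n ^ d := by rw [sum_const, card_univ, nsmul_eq_mul]
  _ ≤ C := hsum n

namespace SPath

variable {Ed V : Type} {σ τ : Ed → V}

def take (n : ℕ) (x : SPath Ed σ τ) : Fin n → Ed := fun i => x.1 i

def tail (x : SPath Ed σ τ) : SPath Ed σ τ := ⟨fun n => x.1 (n + 1), fun n => x.2 (n + 1)⟩

def cons (e : Ed) (x : SPath Ed σ τ) (h : τ e = σ (x.1 0)) : SPath Ed σ τ :=
  ⟨fun | 0 => e | n + 1 => x.1 n, fun | 0 => h | n + 1 => x.2 n⟩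

lemma take_succ (x : SPath Ed σ τ) (n : ℕ) :
    x.take (n + 1) = Fin.cons (x.1 0) (x.tail.take n) := by
  ext i
  cases i using Fin.cases <;> rfl

lemma take_cons (e : Ed) (x : SPath Ed σ τ) (h : τ e = σ (x.1 0)) (n : ℕ) :
    (x.cons e h).take (n + 1) = Fin.cons e (x.take n) := by
  ext i
  cases i using Fin.cases <;> rfl

def splice (x y : SPath Ed σ τ) (n : ℕ) (h : σ (x.1 n) = σ (y.1 0)) : SPath Ed σ τ :=
  ⟨fun i => if i < n then x.1 i else y.1 (i - n), fun i => by
    by_cases h₁ : i + 1 < n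
    · simp only [h₁, show i < n by omega, if_true, x.2 i]
    by_cases h₂ : i < n
    · obtain rfl : n = i + 1 := by omega
      simp [x.2 i, h]
    · simp only [h₁, h₂, if_false, y.2 (i - n), show i + 1 - n = i - n + 1 by omega]⟩

lemma splice_apply_of_lt {x y : SPath Ed σ τ} {n : ℕ} (h : σ (x.1 n) = σ (y.1 0)) {i : ℕ}
    (hi : i < n) : (x.splice y n h).1 i = x.1 i :=
  if_pos hi

lemma splice_apply_add {x y : SPath Ed σ τ} {n : ℕ} (h : σ (x.1 n) = σ (y.1 0)) (j : ℕ) :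
    (x.splice y n h).1 (n + j) = y.1 j := by
  simp [splice]

lemma source_splice {x y : SPath Ed σ τ} {n : ℕ} (h : σ (x.1 n) = σ (y.1 0)) :
    σ ((x.splice y n h).1 0) = σ (x.1 0) := by
  rcases Nat.eq_zero_or_pos n with rfl | hn
  · have h₀ := splice_apply_add h 0
    rw [add_zero] at h₀
    rw [h₀, h]
  · rw [splice_apply_of_lt h hn]

lemma exists_starting_at (hout : ∀ v, ∃ e, σ e = v) (v : V) :
    ∃ x : SPath Ed σ τ, σ (x.1 0) = v := by
  choose f hf using hout
  exact ⟨⟨fun n => Nat.rec (f v) (fun _ e => f (τ e)) n, fun n => (hf _).symm⟩, hf v⟩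

lemma le_slcp {x y : SPath Ed σ τ} {n : ℕ} (hxy : x ≠ y) (h : ∀ i < n, x.1 i = y.1 i) :
    n ≤ slcp x y := by
  have hne : {i | x.1 i ≠ y.1 i}.Nonempty := by
    by_contra hempty
    exact hxy (Subtype.ext (funext fun i => by_contra fun hi => hempty ⟨i, hi⟩))
  exact le_csInf hne fun i hi => not_lt.1 fun hin => hi (h i hin)

lemma slcp_le {x y : SPath Ed σ τ} {n : ℕ} (h : x.1 n ≠ y.1 n) : slcp x y ≤ n :=
  Nat.sInf_le h

section Blocks

variable {ι : Type} {K : ℕ}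

def ofBlocks (hK : 0 < K) (B : ι → SPath Ed σ τ) (hB : ∀ i j, σ ((B i).1 K) = σ ((B j).1 0))
    (b : ℕ → ι) : SPath Ed σ τ :=
  ⟨fun n => (B (b (n / K))).1 (n % K), fun n => by
    have hn := Nat.mod_add_div n K
    have hr := Nat.mod_lt n hK
    dsimp only
    generalize n % K = r at *
    generalize n / K = q at *
    rcases Nat.lt_or_ge (r + 1) K with hlt | hge
    · obtain ⟨hq', hr'⟩ := (Nat.div_mod_unique hK).2
        (⟨by omega, hlt⟩ : r + 1 + K * q = n + 1 ∧ _)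
      rw [hq', hr']
      exact (B _).2 _
    · obtain ⟨hq', hr'⟩ := (Nat.div_mod_unique hK).2
        (⟨by rw [mul_add]; omega, hK⟩ : 0 + K * (q + 1) = n + 1 ∧ _)
      rw [hq', hr']
      exact ((B _).2 _).trans (by rw [show r + 1 = K by omega]; exact hB _ _)⟩

variable {hK : 0 < K} {B : ι → SPath Ed σ τ} {hB : ∀ i j, σ ((B i).1 K) = σ ((B j).1 0)}

lemma ofBlocks_apply (b : ℕ → ι) (m : ℕ) {k : ℕ} (hk : k < K) :
    (ofBlocks hK B hB b).1 (k + K * m) = (B (b m)).1 k := by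
  obtain ⟨hq, hr⟩ := (Nat.div_mod_unique hK).2 (⟨rfl, hk⟩ : k + K * m = k + K * m ∧ k < K)
  simp only [ofBlocks, hq, hr]

lemma exists_ofBlocks_apply_ne (hBinj : Function.Injective fun i => (B i).take K)
    {b b' : ℕ → ι} {m : ℕ} (h : b m ≠ b' m) :
    ∃ n < (m + 1) * K, (ofBlocks hK B hB b).1 n ≠ (ofBlocks hK B hB b').1 n := by
  obtain ⟨k, hk⟩ := Function.ne_iff.1 (hBinj.ne h)
  refine ⟨k + K * m, by nlinarith [k.2], ?_⟩
  rwa [ofBlocks_apply b m k.2, ofBlocks_apply b' m k.2]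

end Blocks

end SPath

section Words

variable {Ed V : Type} [Fintype Ed] (σ τ : Ed → V)

open Classical in
noncomputable def words (n : ℕ) (v : V) : Finset (Fin n → Ed) :=
  {p | ∃ x : SPath Ed σ τ, σ (x.1 0) = v ∧ x.take n = p}

variable {σ τ}

lemma mem_words {n : ℕ} {v : V} {p : Fin n → Ed} :
    p ∈ words σ τ n v ↔ ∃ x : SPath Ed σ τ, σ (x.1 0) = v ∧ x.take n = p := by
  simp [words]

lemma card_words_zero {v : V} (h : ∃ x : SPath Ed σ τ, σ (x.1 0) = v) :
    #(words σ τ 0 v) = 1 := by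
  obtain ⟨x, hx⟩ := h
  rw [card_eq_one]
  exact ⟨x.take 0, eq_singleton_iff_unique_mem.2
    ⟨mem_words.2 ⟨x, hx, rfl⟩, fun p _ => Subsingleton.elim _ _⟩⟩

lemma words_succ [DecidableEq V] [DecidableEq Ed] (n : ℕ) (v : V) :
    words σ τ (n + 1) v =
      ({e | σ e = v} : Finset Ed).biUnion fun e => (words σ τ n (τ e)).image (Fin.cons e) := by
  ext p
  simp only [mem_words, mem_biUnion, mem_image, mem_filter, mem_univ, true_and]
  constructor
  · rintro ⟨x, hx, rfl⟩
    exact ⟨x.1 0, hx, x.tail.take n, ⟨x.tail, (x.2 0).symm, rfl⟩, (x.take_succ n).symm⟩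
  · rintro ⟨e, he, q, ⟨y, hy, rfl⟩, rfl⟩
    exact ⟨y.cons e hy.symm, he, y.take_cons e hy.symm n⟩

lemma card_words_succ [DecidableEq V] (n : ℕ) (v : V) :
    #(words σ τ (n + 1) v) = ∑ e with σ e = v, #(words σ τ n (τ e)) := by
  classical
  rw [words_succ, card_biUnion]
  · exact sum_congr rfl fun e _ =>
      card_image_of_injective _ (Fin.cons_right_injective (α := fun _ => Ed) e)
  · intro e _ e' _ hee'
    simp only [Function.onFun, disjoint_left, mem_image]
    rintro _ ⟨q, -, rfl⟩ ⟨q', -, hq⟩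
    exact hee' (by simpa using (congrFun hq 0).symm)

variable [DecidableEq V] {u : V → ℝ} {Λ : ℝ}
  (hEig : ∀ v, ∑ e with σ e = v, u (τ e) = Λ * u v)
  (hpath : ∀ v, ∃ x : SPath Ed σ τ, σ (x.1 0) = v)
include hEig hpath

lemma mul_card_words_le {m : ℝ} (hm : ∀ v, m ≤ u v) (n : ℕ) (v : V) :
    m * #(words σ τ n v) ≤ Λ ^ n * u v := by
  induction n generalizing v with
  | zero => simpa [card_words_zero (hpath v)] using hm v
  | succ n ih =>
    rw [card_words_succ, Nat.cast_sum, mul_sum, pow_succ, mul_assoc, ← hEig, mul_sum]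
    exact sum_le_sum fun e _ => ih (τ e)

lemma pow_mul_le_mul_card_words {M : ℝ} (hM : ∀ v, u v ≤ M) (n : ℕ) (v : V) :
    Λ ^ n * u v ≤ M * #(words σ τ n v) := by
  induction n generalizing v with
  | zero => simpa [card_words_zero (hpath v)] using hM v
  | succ n ih =>
    rw [card_words_succ, Nat.cast_sum, mul_sum, pow_succ, mul_assoc, ← hEig, mul_sum]
    exact sum_le_sum fun e _ => ih (τ e)

lemma sum_card_words_le [Fintype V] (hu : ∀ v, 0 < u v) {v₀ : V} (hv₀ : ∀ v, u v₀ ≤ u v)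
    (n : ℕ) : (∑ v, #(words σ τ n v) : ℝ) ≤ (∑ v, u v) / u v₀ * Λ ^ n := by
  rw [div_mul_eq_mul_div, le_div_iff₀ (hu v₀), sum_mul, sum_mul]
  exact sum_le_sum fun v _ => by linarith [mul_card_words_le hEig hpath hv₀ n v]

end Words

section Adjacency

variable {Ed V : Type} [Fintype V] [DecidableEq V] {σ τ : Ed → V} {A : Matrix V V ℕ}
  (hA : ∀ v v', A v v' = Nat.card {e : Ed // σ e = v ∧ τ e = v'})
include hA

lemma sum_source_eq_mulVec [Fintype Ed] (f : V → ℝ) (v : V) :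
    ∑ e with σ e = v, f (τ e) = (A.map (Nat.cast : ℕ → ℝ)).mulVec f v := by
  rw [← sum_fiberwise _ τ, Matrix.mulVec, dotProduct]
  refine sum_congr rfl fun v' _ => ?_
  rw [sum_congr rfl fun e he => by rw [(mem_filter.1 he).2], sum_const, nsmul_eq_mul,
    Matrix.map_apply, hA, Nat.card_eq_fintype_card, Fintype.card_subtype, filter_filter]

lemma exists_spath_of_pow_pos (hpath : ∀ v, ∃ x : SPath Ed σ τ, σ (x.1 0) = v) {k : ℕ} :
    ∀ {v v' : V}, 0 < (A ^ k) v v' → ∃ x : SPath Ed σ τ, σ (x.1 0) = v ∧ σ (x.1 k) = v' := by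
  induction k with
  | zero =>
    intro v v' h
    obtain rfl : v = v' := by
      by_contra hne
      simp [Matrix.one_apply_ne hne] at h
    obtain ⟨x, hx⟩ := hpath v
    exact ⟨x, hx, hx⟩
  | succ k ih =>
    intro v v' h
    rw [pow_succ', Matrix.mul_apply] at h
    obtain ⟨v'', -, h''⟩ := sum_pos_iff.1 h
    obtain ⟨hedge, hpow⟩ := CanonicallyOrderedAdd.mul_pos.1 h''
    rw [hA, Nat.card_pos_iff] at hedge
    obtain ⟨⟨e, rfl, rfl⟩⟩ := hedge.1
    obtain ⟨y, hy, hyk⟩ := ih hpow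
    exact ⟨y.cons e hy.symm, rfl, hyk⟩

lemma exists_loops [Fintype Ed] (hpath : ∀ v, ∃ x : SPath Ed σ τ, σ (x.1 0) = v) {k₀ : ℕ}
    (hk₀ : ∀ v v', 0 < (A ^ k₀) v v') (w : V) (n : ℕ) :
    ∃ (N : ℕ) (B : Fin N → SPath Ed σ τ), (∀ i j, σ ((B i).1 (n + k₀)) = σ ((B j).1 0)) ∧
      Function.Injective (fun i => (B i).take (n + k₀)) ∧
      (#(words σ τ n w) : ℝ) ≤ Fintype.card V * N := by
  -- Keep the words whose chosen path reaches some `v'` at time `n` (at least a `1 / |V|` fraction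
  -- of them, by pigeonhole), and return from `v'` to `w` along one fixed path of length `k₀`.
  choose x hx using fun p : words σ τ n w => mem_words.1 p.2
  have : Nonempty V := ⟨w⟩
  have hV : (0 : ℝ) < Fintype.card V := by exact_mod_cast Fintype.card_pos
  obtain ⟨v', hv'⟩ := Fintype.exists_le_card_fiber_of_nsmul_le_card (fun p => σ ((x p).1 n))
    (b := (#(words σ τ n w) : ℝ) / Fintype.card V)
    (by rw [nsmul_eq_mul, mul_div_cancel₀ _ hV.ne', Fintype.card_coe])
  set F : Finset (words σ τ n w) := {p | σ ((x p).1 n) = v'}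
  obtain ⟨y, hy₀, hyk⟩ := exists_spath_of_pow_pos hA hpath (hk₀ v' w)
  have hxy (p : F) : σ ((x p).1 n) = σ (y.1 0) := (mem_filter.1 p.2).2.trans hy₀.symm
  let B (i : Fin #F) : SPath Ed σ τ := (x (F.equivFin.symm i)).splice y n (hxy _)
  refine ⟨#F, B, fun i j => ?_, fun i j hij => ?_, ?_⟩
  · dsimp only [B]
    rw [SPath.splice_apply_add, hyk, SPath.source_splice (σ := σ), (hx _).1]
  · apply F.equivFin.symm.injective
    apply Subtype.ext
    apply Subtype.ext
    rw [← (hx _).2, ← (hx _).2]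
    ext l
    simpa [B, SPath.take, SPath.splice_apply_of_lt _ l.2] using congrFun hij ⟨l, by omega⟩
  · rw [div_le_iff₀ hV] at hv'
    linarith

end Adjacency

lemma exists_source_eq_of_eigen {Ed V : Type} [Fintype Ed] [DecidableEq V] {σ τ : Ed → V}
    {u : V → ℝ} {Λ : ℝ} (hu : ∀ v, 0 < u v) (hΛ : 0 < Λ)
    (hEig : ∀ v, ∑ e with σ e = v, u (τ e) = Λ * u v) (v : V) : ∃ e, σ e = v := by
  obtain ⟨e, he, -⟩ := exists_ne_zero_of_sum_ne_zero ((hEig v).trans_ne (mul_pos hΛ (hu v)).ne')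
  exact ⟨e, (mem_filter.1 he).2⟩

namespace SPath

section Metric

variable {Ed V : Type} {σ τ : Ed → V} [MetricSpace (SPath Ed σ τ)] {α : ℝ}
  {a : SPath Ed σ τ → ℕ → ℝ}
  (hdist : ∀ x y : SPath Ed σ τ, x ≠ y → dist x y = a x (slcp x y) * α ^ slcp x y)
include hdist

lemma dist_le_of_take_eq (hα : α ∈ Set.Ioo 0 1) {a₂ : ℝ} (ha₂ : 0 ≤ a₂) (hab : ∀ x n, a x n ≤ a₂)
    (n : ℕ) (x y : SPath Ed σ τ) (h : x.take n = y.take n) : dist x y ≤ a₂ * α ^ n := by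
  rcases eq_or_ne x y with rfl | hxy
  · rw [dist_self]
    exact mul_nonneg ha₂ (pow_nonneg hα.1.le n)
  rw [hdist x y hxy]
  exact mul_le_mul (hab x _) (pow_le_pow_of_le_one hα.1.le hα.2.le
    (le_slcp hxy fun i hi => congrFun h ⟨i, hi⟩)) (pow_nonneg hα.1.le _) ha₂

lemma le_dist_of_apply_ne (hα : α ∈ Set.Ioo 0 1) {a₁ : ℝ} (ha₁ : 0 ≤ a₁)
    (hab : ∀ x n, a₁ ≤ a x n) (n : ℕ) (x y : SPath Ed σ τ) (h : x.1 n ≠ y.1 n) :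
    a₁ * α ^ n ≤ dist x y := by
  have hxy : x ≠ y := by rintro rfl; exact h rfl
  rw [hdist x y hxy]
  exact mul_le_mul (hab x _) (pow_le_pow_of_le_one hα.1.le hα.2.le (slcp_le h))
    (pow_nonneg hα.1.le _) (ha₁.trans (hab x _))

end Metric

theorem dimH_univ_le {Ed V : Type} [Fintype Ed] [Fintype V] {σ τ : Ed → V}
    [MetricSpace (SPath Ed σ τ)] {α a₂ Λ C : ℝ} (hα : α ∈ Set.Ioo 0 1) (hΛ : 1 ≤ Λ)
    (ha₂ : 0 ≤ a₂) (hdist : ∀ n (x y : SPath Ed σ τ), x.take n = y.take n → dist x y ≤ a₂ * α ^ n)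
    (hcard : ∀ n, (∑ v, #(words σ τ n v) : ℝ) ≤ C * Λ ^ n) :
    dimH (Set.univ : Set (SPath Ed σ τ)) ≤ ENNReal.ofReal (Real.log Λ / -Real.log α) := by
  set d := Real.log Λ / -Real.log α
  have hd : 0 ≤ d :=
    div_nonneg (Real.log_nonneg hΛ) (neg_nonneg.2 (Real.log_nonpos hα.1.le hα.2.le))
  have hαd : α ^ d = Λ⁻¹ := rpow_log_div_neg_log hα.1 hα.2.ne (by linarith)
  refine dimH_le_of_covers (ι := fun n => Σ v, words σ τ n v)
    (fun n p => {x | x.take n = p.2.1}) (fun n x _ => ?_)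
    (r := fun n => ENNReal.ofReal (a₂ * α ^ n)) ?_ (fun n p => ?_) hd
    (C := ENNReal.ofReal (C * a₂ ^ d)) ENNReal.ofReal_ne_top (fun n => ?_)
  · exact Set.mem_iUnion.2 ⟨⟨σ (x.1 0), x.take n, mem_words.2 ⟨x, rfl, rfl⟩⟩, rfl⟩
  · simpa using ENNReal.tendsto_ofReal
      ((tendsto_pow_atTop_nhds_zero_of_lt_one hα.1.le hα.2).const_mul a₂)
  · refine Metric.ediam_le fun x hx y hy => ?_
    rw [edist_dist]
    exact ENNReal.ofReal_le_ofReal (hdist n x y (hx.trans hy.symm))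
  · have hαn : 0 ≤ α ^ n := pow_nonneg hα.1.le n
    rw [Fintype.card_sigma, ENNReal.ofReal_rpow_of_nonneg (mul_nonneg ha₂ hαn) hd,
      ← ENNReal.ofReal_natCast, ← ENNReal.ofReal_mul (Nat.cast_nonneg _)]
    refine ENNReal.ofReal_le_ofReal ?_
    simp only [Fintype.card_coe, Nat.cast_sum]
    have hΛn : 0 < Λ ^ n := pow_pos (by linarith) n
    calc (∑ v, #(words σ τ n v) : ℝ) * (a₂ * α ^ n) ^ d
        = (∑ v, #(words σ τ n v) : ℝ) * (a₂ ^ d * (Λ ^ n)⁻¹) := by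
          rw [Real.mul_rpow ha₂ hαn, ← Real.rpow_pow_comm hα.1.le, hαd, inv_pow]
    _ ≤ C * Λ ^ n * (a₂ ^ d * (Λ ^ n)⁻¹) := by
          gcongr
          exact hcard n
    _ = C * a₂ ^ d := by field_simp

section Blocks

variable {Ed V : Type} {σ τ : Ed → V} [MetricSpace (SPath Ed σ τ)] {α a₁ : ℝ}
  (hα : α ∈ Set.Ioo 0 1) (ha₁ : 0 < a₁)
  (hdist : ∀ n (x y : SPath Ed σ τ), x.1 n ≠ y.1 n → a₁ * α ^ n ≤ dist x y)
  {N K : ℕ} (hK : 0 < K) {B : Fin N → SPath Ed σ τ} (hB : ∀ i j, σ ((B i).1 K) = σ ((B j).1 0))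
  (hBinj : Function.Injective fun i => (B i).take K)
include hα ha₁ hdist hK hB hBinj

lemma abs_ofDigits_sub_le_dist_ofBlocks (b b' : ℕ → Fin N) :
    |Real.ofDigits b - Real.ofDigits b'| ≤ N / a₁ ^ (Real.log N / -Real.log (α ^ K)) *
      dist (ofBlocks hK B hB b) (ofBlocks hK B hB b') ^ (Real.log N / -Real.log (α ^ K)) := by
  set β := α ^ K
  set r := Real.log N / -Real.log β
  have hβ : β ∈ Set.Ioo 0 1 := ⟨pow_pos hα.1 K, pow_lt_one₀ hα.1.le hα.2 hK.ne'⟩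
  have hN : (1 : ℝ) ≤ N := by exact_mod_cast (b 0).pos
  have hN₀ : (N : ℝ) ≠ 0 := by positivity
  have hr : 0 ≤ r :=
    div_nonneg (Real.log_nonneg hN) (neg_nonneg.2 (Real.log_nonpos hβ.1.le hβ.2.le))
  -- One more block of agreement between paths is one more base-`N` digit.
  have hβr : β ^ r = (N : ℝ)⁻¹ := rpow_log_div_neg_log hβ.1 hβ.2.ne (by linarith)
  rcases eq_or_ne b b' with rfl | hbb
  · rw [sub_self, abs_zero]
    positivity
  have hex : ∃ m, b m ≠ b' m := Function.ne_iff.1 hbb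
  obtain ⟨n, hn, hne⟩ := exists_ofBlocks_apply_ne (hK := hK) (hB := hB) hBinj (Nat.find_spec hex)
  have hsep : a₁ * β ^ (Nat.find hex + 1) ≤ dist (ofBlocks hK B hB b) (ofBlocks hK B hB b') :=
    calc a₁ * β ^ (Nat.find hex + 1) = a₁ * α ^ ((Nat.find hex + 1) * K) := by
          rw [← pow_mul, mul_comm K]
    _ ≤ a₁ * α ^ n :=
          mul_le_mul_of_nonneg_left (pow_le_pow_of_le_one hα.1.le hα.2.le hn.le) ha₁.le
    _ ≤ _ := hdist n _ _ hne
  calc |Real.ofDigits b - Real.ofDigits b'| ≤ ((N : ℝ) ^ Nat.find hex)⁻¹ :=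
        Real.abs_ofDigits_sub_ofDigits_le fun m hm => not_not.1 (Nat.find_min hex hm)
  _ = N * (β ^ (Nat.find hex + 1)) ^ r := by
        rw [← Real.rpow_pow_comm hβ.1.le, hβr, inv_pow, pow_succ, mul_inv, mul_comm,
          mul_assoc, inv_mul_cancel₀ hN₀, mul_one]
  _ = N / a₁ ^ r * (a₁ * β ^ (Nat.find hex + 1)) ^ r := by
        rw [Real.mul_rpow ha₁.le (pow_nonneg hβ.1.le _), div_mul_eq_mul_div, mul_comm (a₁ ^ r),
          ← mul_assoc, mul_div_assoc, div_self (Real.rpow_pos_of_pos ha₁ r).ne', mul_one]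
  _ ≤ _ := by
        gcongr
        exact mul_nonneg ha₁.le (pow_nonneg hβ.1.le _)

theorem le_dimH_univ_of_blocks :
    ENNReal.ofReal (Real.log N / (K * -Real.log α)) ≤ dimH (Set.univ : Set (SPath Ed σ τ)) := by
  have hlogα : 0 < -Real.log α := neg_pos.2 (Real.log_neg hα.1 hα.2)
  rcases le_or_gt N 1 with hN | hN
  · rw [ENNReal.ofReal_of_nonpos (div_nonpos_of_nonpos_of_nonneg
      (Real.log_nonpos (Nat.cast_nonneg _) (by exact_mod_cast hN)) (by positivity))]
    positivity
  set F := ofBlocks hK B hB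
  have hFinj : Function.Injective F := fun b b' hbb' => by
    by_contra hne
    obtain ⟨m, hm⟩ := Function.ne_iff.1 hne
    obtain ⟨n, -, hn⟩ := exists_ofBlocks_apply_ne (hK := hK) (hB := hB) hBinj hm
    exact hn (congrArg (fun x : SPath Ed σ τ => x.1 n) hbb')
  set r := Real.log N / -Real.log (α ^ K)
  have hr : r = Real.log N / (K * -Real.log α) := by
    simp only [r, Real.log_pow, neg_mul_eq_mul_neg]
  have hr₀ : 0 < r :=
    hr ▸ div_pos (Real.log_pos (by exact_mod_cast hN)) (mul_pos (by exact_mod_cast hK) hlogα)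
  have : Nonempty (ℕ → Fin N) := ⟨fun _ => ⟨0, by omega⟩⟩
  set g := fun x => Real.ofDigits (Function.invFun F x)
  have hg (b : ℕ → Fin N) : g (F b) = Real.ofDigits b := by
    simp only [g, Function.leftInverse_invFun hFinj b]
  have hhold : HolderOnWith (N / a₁ ^ r).toNNReal r.toNNReal g (Set.range F) := by
    refine HolderOnWith.of_dist_le ?_
    rintro _ ⟨b, rfl⟩ _ ⟨b', rfl⟩
    rw [hg, hg, Real.dist_eq, Real.coe_toNNReal _ (by positivity), Real.coe_toNNReal _ hr₀.le]
    exact abs_ofDigits_sub_le_dist_ofBlocks hα ha₁ hdist hK hB hBinj b b'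
  have hsurj : Set.Icc 0 1 ⊆ g '' Set.range F := fun y hy =>
    let ⟨b, _, hb⟩ := Real.ofDigits_SurjOn hN hy
    ⟨F b, ⟨b, rfl⟩, (hg b).trans hb⟩
  calc ENNReal.ofReal (Real.log N / (K * -Real.log α)) = (r.toNNReal : ℝ≥0∞) := by rw [hr]; rfl
  _ ≤ dimH (Set.range F) :=
        le_dimH_of_holderOnWith_Icc_subset hhold (Real.toNNReal_pos.2 hr₀) hsurj
  _ ≤ dimH Set.univ := dimH_mono (Set.subset_univ _)

end Blocks

theorem le_dimH_univ_of_card_words {Ed V : Type} [Fintype Ed] [Fintype V] [DecidableEq V]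
    {σ τ : Ed → V} {A : Matrix V V ℕ}
    (hA : ∀ v v', A v v' = Nat.card {e : Ed // σ e = v ∧ τ e = v'})
    (hpath : ∀ v, ∃ x : SPath Ed σ τ, σ (x.1 0) = v) {k₀ : ℕ} (hk₀ : ∀ v v', 0 < (A ^ k₀) v v')
    [MetricSpace (SPath Ed σ τ)] {α a₁ : ℝ} (hα : α ∈ Set.Ioo 0 1) (ha₁ : 0 < a₁)
    (hdist : ∀ n (x y : SPath Ed σ τ), x.1 n ≠ y.1 n → a₁ * α ^ n ≤ dist x y)
    {w : V} {c Λ : ℝ} (hc : 0 < c) (hΛ : 0 < Λ) (hwords : ∀ n, c * Λ ^ n ≤ #(words σ τ n w))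
    {n : ℕ} (hn : 0 < n + k₀) :
    ENNReal.ofReal ((Real.log (c / Fintype.card V) + n * Real.log Λ) / ((n + k₀) * -Real.log α))
      ≤ dimH (Set.univ : Set (SPath Ed σ τ)) := by
  obtain ⟨N, B, hB, hBinj, hN⟩ := exists_loops hA hpath hk₀ w n
  have : Nonempty V := ⟨w⟩
  have hV : (0 : ℝ) < Fintype.card V := by exact_mod_cast Fintype.card_pos
  have hcN : c / Fintype.card V * Λ ^ n ≤ N := by
    rw [div_mul_eq_mul_div, div_le_iff₀ hV]
    linarith [hwords n]
  have hlog : Real.log (c / Fintype.card V) + n * Real.log Λ ≤ Real.log N := by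
    rw [← Real.log_pow, ← Real.log_mul (by positivity) (by positivity)]
    exact Real.log_le_log (by positivity) hcN
  refine le_trans (ENNReal.ofReal_le_ofReal ?_) (le_dimH_univ_of_blocks hα ha₁ hdist hn hB hBinj)
  have hlogα : 0 < -Real.log α := neg_pos.2 (Real.log_neg hα.1 hα.2)
  push_cast
  gcongr

theorem le_dimH_univ {Ed V : Type} [Fintype Ed] [Fintype V] [Nonempty V] [DecidableEq V]
    {σ τ : Ed → V} {A : Matrix V V ℕ}
    (hA : ∀ v v', A v v' = Nat.card {e : Ed // σ e = v ∧ τ e = v'})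
    (hprim : ∃ k : ℕ, ∀ v v', 0 < (A ^ k) v v') {Λ : ℝ} (hΛ : 1 < Λ) {u : V → ℝ}
    (hu : ∀ v, 0 < u v) (hEig : ∀ v, ∑ e with σ e = v, u (τ e) = Λ * u v)
    [MetricSpace (SPath Ed σ τ)] {α a₁ : ℝ} (hα : α ∈ Set.Ioo 0 1) (ha₁ : 0 < a₁)
    (hdist : ∀ n (x y : SPath Ed σ τ), x.1 n ≠ y.1 n → a₁ * α ^ n ≤ dist x y) :
    ENNReal.ofReal (Real.log Λ / -Real.log α) ≤ dimH (Set.univ : Set (SPath Ed σ τ)) := by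
  obtain ⟨k₀, hk₀⟩ := hprim
  have hpath : ∀ v, ∃ x : SPath Ed σ τ, σ (x.1 0) = v :=
    exists_starting_at (exists_source_eq_of_eigen hu (zero_lt_one.trans hΛ) hEig)
  obtain ⟨vM, hvM⟩ := Finite.exists_max u
  set w := Classical.arbitrary V
  have hwords (n : ℕ) : u w / u vM * Λ ^ n ≤ #(words σ τ n w) := by
    rw [div_mul_eq_mul_div, div_le_iff₀ (hu vM)]
    linarith [pow_mul_le_mul_card_words hEig hpath hvM n w]
  set C := (Real.log (u w / u vM / Fintype.card V) - k₀ * Real.log Λ) / -Real.log α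
  -- Loops of length `K` give a Hölder exponent of at least `d + C / K`.
  have hbound (K : ℕ) (hK : k₀ + 1 ≤ K) :
      ENNReal.ofReal (Real.log Λ / -Real.log α + C / K) ≤ dimH (Set.univ : Set (SPath Ed σ τ)) := by
    obtain ⟨n, rfl⟩ : ∃ n, K = n + k₀ := ⟨K - k₀, by omega⟩
    have hnk : (n : ℝ) + k₀ ≠ 0 := by norm_cast; omega
    convert le_dimH_univ_of_card_words hA hpath hk₀ hα ha₁ hdist (div_pos (hu w) (hu vM))
      (zero_lt_one.trans hΛ) hwords (n := n) (by omega) using 2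
    simp only [C]
    push_cast
    field_simp
    ring
  refine le_of_tendsto (ENNReal.tendsto_ofReal ?_) (eventually_atTop.2 ⟨k₀ + 1, hbound⟩)
  simpa using tendsto_const_nhds.add (tendsto_const_div_atTop_nhds_zero_nat C)

end SPath

theorem stmt5_general {V Ed : Type} [Fintype V] [Fintype Ed] [Nonempty V] [DecidableEq V]
    (σ τ : Ed → V)
    (A : Matrix V V ℕ)
    (hA : ∀ v v', A v v' = Nat.card {e : Ed // σ e = v ∧ τ e = v'})
    (hprim : ∃ k : ℕ, ∀ v v', 0 < (A ^ k) v v')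
    (Λ : ℝ) (hΛ : 1 < Λ)
    (hPF : ∃ u : V → ℝ, (∀ v, 0 < u v) ∧ (A.map (Nat.cast : ℕ → ℝ)).mulVec u = Λ • u)
    (α : ℝ) (hα : α ∈ Set.Ioo (0 : ℝ) 1)
    (a : SPath Ed σ τ → ℕ → ℝ) (a₁ a₂ : ℝ) (ha₁ : 0 < a₁)
    (hab : ∀ x n, a x n ∈ Set.Icc a₁ a₂)
    [MetricSpace (SPath Ed σ τ)]
    (hdist : ∀ x y : SPath Ed σ τ, x ≠ y → dist x y = a x (slcp x y) * α ^ slcp x y) :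
    dimH (Set.univ : Set (SPath Ed σ τ)) =
      ENNReal.ofReal (Real.log Λ / (-Real.log α)) := by
  obtain ⟨u, hu, hPFu⟩ := hPF
  have hEig (v : V) : ∑ e with σ e = v, u (τ e) = Λ * u v := by
    rw [sum_source_eq_mulVec hA, hPFu, Pi.smul_apply, smul_eq_mul]
  have hpath : ∀ v, ∃ x : SPath Ed σ τ, σ (x.1 0) = v :=
    SPath.exists_starting_at (exists_source_eq_of_eigen hu (zero_lt_one.trans hΛ) hEig)
  obtain ⟨x₀, -⟩ := hpath (Classical.arbitrary V)
  have ha₂ : 0 ≤ a₂ := ha₁.le.trans ((hab x₀ 0).1.trans (hab x₀ 0).2)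
  obtain ⟨vm, hvm⟩ := Finite.exists_min u
  apply le_antisymm
  · exact SPath.dimH_univ_le hα hΛ.le ha₂
      (SPath.dist_le_of_take_eq hdist hα ha₂ fun x n => (hab x n).2)
      (sum_card_words_le hEig hpath hu hvm)
  · exact SPath.le_dimH_univ hA hprim hΛ hu hEig hα ha₁
      (SPath.le_dist_of_apply_ne hdist hα ha₁.le fun x n => (hab x n).1)

/-- The Hausdorff dimension of a self-similar ultrametric Cantor set (the path space of a
stationary Bratteli diagram with primitive adjacency matrix `A`, Perron–Frobenius eigenvalue
`Λ`, and ultrametric `ρ(x,y) = a_{x∧y}·α^{|x∧y|}` with weights `a_γ` uniformly bounded away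
from `0` and `∞`) equals the abscissa of convergence of its zeta function,
`log Λ / (−log α)`. -/
theorem stmt5 {V Ed : Type} [Fintype V] [Fintype Ed] [Nonempty V] [DecidableEq V]
    (σ τ : Ed → V)
    (A : Matrix V V ℕ)
    (hA : ∀ v v', A v v' = Nat.card {e : Ed // σ e = v ∧ τ e = v'})
    (hprim : ∃ k : ℕ, ∀ v v', 0 < (A ^ k) v v')
    (Λ : ℝ) (hΛ : 1 < Λ)
    (hPF : ∃ u : V → ℝ, (∀ v, 0 < u v) ∧ (A.map (Nat.cast : ℕ → ℝ)).mulVec u = Λ • u)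
    (α : ℝ) (hα : α ∈ Set.Ioo (0 : ℝ) 1)
    (a : SPath Ed σ τ → ℕ → ℝ) (a₁ a₂ : ℝ) (ha₁ : 0 < a₁)
    (hab : ∀ x n, a x n ∈ Set.Icc a₁ a₂)
    (hagree : ∀ x y : SPath Ed σ τ, ∀ n, (∀ i < n, x.1 i = y.1 i) → a x n = a y n)
    [MetricSpace (SPath Ed σ τ)]
    (hdist : ∀ x y : SPath Ed σ τ, x ≠ y → dist x y = a x (slcp x y) * α ^ slcp x y) :
    dimH (Set.univ : Set (SPath Ed σ τ)) =
      ENNReal.ofReal (Real.log Λ / (-Real.log α)) :=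
  stmt5_general σ τ A hA hprim Λ hΛ hPF α hα a a₁ a₂ ha₁ hab hdist
end

section
/- Let C be an ultrametric space in which every ball is a cylinder of a path in a Bratteli diagram, and suppose for some d > 0 that every cylinder [γ] satisfies diam([γ])^d < Σ_{η ∈ ext(γ)} diam([η])^d, where ext(γ) are the one-step extensions of γ (whose cylinders partition [γ]). Then for any finite partition of C by cylinders one has Σ_i diam(u_i)^d ≥ diam(C)^d, hence the d-dimensional Hausdorff content of C is at least diam(C)^d > 0, and dim_H(C) ≥ d. -/
/-!
Strict growth of `diam ^ d` under one-step extension propagates down the diagram: a finite cover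
of a cylinder `[δ]` by descendants of `δ` either contains `δ`, or it splits along the children of
`δ` into strictly smaller covers of their cylinders (a child's cylinder is a proper subset of
`[δ]`), so by induction its `diam ^ d`-sum is at least `diam [δ] ^ d`.

For the Hausdorff measure, a countable cover by sets `tₙ` is enlarged to open balls of radii
`rₙ` with `rₙ ^ d = diam tₙ ^ d + εₙ`, `∑ εₙ` small. Compactness leaves finitely many of them, and
the closed balls around them are cylinders of diameter at most `2 rₙ` covering the space, so
`μH[d] C ≥ (diam C / 2) ^ d > 0`.
-/

open Metric Set MeasureTheory Finset
open scoped ENNReal NNReal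

section CylinderTree

variable {α P : Type*} {ext : P → Finset P} {cyl : P → Set α}

theorem cyl_subset_of_reflTransGen (hpart : ∀ γ, ⋃ η ∈ ext γ, cyl η = cyl γ) {δ γ : P}
    (h : Relation.ReflTransGen (fun a b => b ∈ ext a) δ γ) : cyl γ ⊆ cyl δ := by
  induction h with
  | refl => exact subset_rfl
  | tail _ hmem ih => exact ((subset_biUnion_of_mem hmem).trans_eq (hpart _)).trans ih

theorem cyl_ssubset_of_mem_ext (μ : Set α → ℝ) (hne : ∀ γ, (cyl γ).Nonempty) {δ e : P}
    (hdisj : (↑(ext δ) : Set P).PairwiseDisjoint cyl) (hpart : ⋃ η ∈ ext δ, cyl η = cyl δ)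
    (hgrow : μ (cyl δ) < ∑ η ∈ ext δ, μ (cyl η)) (he : e ∈ ext δ) : cyl e ⊂ cyl δ := by
  refine ssubset_iff_subset_ne.2 ⟨(subset_biUnion_of_mem he).trans_eq hpart, fun hed => ?_⟩
  have hsingle : ext δ = {e} := by
    refine eq_singleton_iff_unique_mem.2 ⟨he, fun e' he' => ?_⟩
    obtain ⟨x, hx⟩ := hne e'
    exact hdisj.elim_set he' he x hx (hed ▸ hpart ▸ mem_biUnion he' hx)
  rw [hsingle, sum_singleton, hed] at hgrow
  exact hgrow.false

theorem le_sum_of_cyl_subset_biUnion (μ : Set α → ℝ) (hμ : ∀ s, 0 ≤ μ s)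
    (hne : ∀ γ, (cyl γ).Nonempty) (hdisj : ∀ γ, (↑(ext γ) : Set P).PairwiseDisjoint cyl)
    (hpart : ∀ γ, ⋃ η ∈ ext γ, cyl η = cyl γ)
    (hgrow : ∀ γ, μ (cyl γ) < ∑ η ∈ ext γ, μ (cyl η)) (F : Finset P) (δ : P)
    (hF : ∀ η ∈ F, Relation.ReflTransGen (fun a b => b ∈ ext a) δ η)
    (hcov : cyl δ ⊆ ⋃ η ∈ F, cyl η) : μ (cyl δ) ≤ ∑ η ∈ F, μ (cyl η) := by
  classical
  induction F using Finset.strongInduction generalizing δ with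
  | H F ih =>
    by_cases hδ : δ ∈ F
    · exact single_le_sum (fun η _ => hμ (cyl η)) hδ
    have hchild : ∀ η ∈ F, ∃ e ∈ ext δ, Relation.ReflTransGen (fun a b => b ∈ ext a) e η :=
      fun η hη => (hF η hη).cases_head.resolve_left (by rintro rfl; exact hδ hη)
    choose! child hchild_mem hchild_reach using hchild
    have hfiber_cov : ∀ e ∈ ext δ, cyl e ⊆ ⋃ η ∈ F.filter (child · = e), cyl η := by
      intro e he x hx
      obtain ⟨η, hη, hxη⟩ := mem_iUnion₂.1 (hcov (hpart δ ▸ mem_biUnion he hx))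
      have hxc := cyl_subset_of_reflTransGen hpart (hchild_reach η hη) hxη
      exact mem_biUnion (mem_filter.2 ⟨hη, (hdisj δ).elim_set (hchild_mem η hη) he x hxc hx⟩) hxη
    have hfiber_ssub : ∀ e ∈ ext δ, F.filter (child · = e) ⊂ F := by
      refine fun e he => (filter_subset _ F).ssubset_of_ne fun hFe => ?_
      refine (cyl_ssubset_of_mem_ext μ hne (hdisj δ) (hpart δ) (hgrow δ) he).not_superset ?_
      refine hcov.trans (iUnion₂_subset fun η hη => ?_)
      rw [← hFe] at hη
      obtain ⟨hηF, rfl⟩ := mem_filter.1 hη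
      exact cyl_subset_of_reflTransGen hpart (hchild_reach η hηF)
    calc μ (cyl δ) ≤ ∑ e ∈ ext δ, μ (cyl e) := (hgrow δ).le
      _ ≤ ∑ e ∈ ext δ, ∑ η ∈ F with child η = e, μ (cyl η) := by
        refine sum_le_sum fun e he => ih _ (hfiber_ssub e he) e (fun η hη => ?_) (hfiber_cov e he)
        obtain ⟨hηF, rfl⟩ := mem_filter.1 hη
        exact hchild_reach η hηF
      _ = ∑ η ∈ F, μ (cyl η) := sum_fiberwise_of_maps_to hchild_mem _

end CylinderTree

theorem ofReal_diam_rpow_le_iSup_ediam_rpow {X : Type*} [PseudoMetricSpace X] {s : Set X}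
    (hs : Bornology.IsBounded s) {d : ℝ} (hd : 0 < d) :
    ENNReal.ofReal (diam s ^ d) ≤ ⨆ _ : s.Nonempty, ediam s ^ d := by
  rcases s.eq_empty_or_nonempty with rfl | hne
  · simp [Real.zero_rpow hd.ne']
  rw [iSup_pos hne, ← ENNReal.ofReal_rpow_of_nonneg diam_nonneg hd.le, diam,
    ENNReal.ofReal_toReal hs.ediam_ne_top]

theorem ofReal_le_hausdorffMeasure_univ {X : Type*} [MetricSpace X] [CompactSpace X]
    [Nonempty X] [MeasurableSpace X] [BorelSpace X] {c d : ℝ} (hd : 0 < d)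
    (h : ∀ (I : Finset ℕ) (x : ℕ → X) (r : ℕ → ℝ), (∀ n, 0 < r n) →
      univ ⊆ ⋃ n ∈ I, ball (x n) (r n) → c ≤ ∑ n ∈ I, r n ^ d) :
    ENNReal.ofReal c ≤ μH[d] (univ : Set X) := by
  rw [Measure.hausdorffMeasure_apply]
  refine le_iSup₂_of_le ⊤ ENNReal.zero_lt_top (le_iInf₂ fun t ht => le_iInf fun _ => ?_)
  refine ENNReal.le_of_forall_pos_le_add fun ε hε _ => ?_
  obtain ⟨ε', hε'_pos, hε'_sum⟩ :=
    ENNReal.exists_pos_sum_of_countable (ENNReal.coe_ne_zero.2 hε.ne') ℕ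
  set r : ℕ → ℝ := fun n => (diam (t n) ^ d + ε' n) ^ d⁻¹
  have hr_pow : ∀ n, r n ^ d = diam (t n) ^ d + ε' n := fun n =>
    Real.rpow_inv_rpow (by positivity) hd.ne'
  have hr_pos : ∀ n, 0 < r n := fun n =>
    Real.rpow_pos_of_pos (add_pos_of_nonneg_of_pos (by positivity) (hε'_pos n)) _
  have hdiam_lt : ∀ n, diam (t n) < r n := fun n => by
    rw [← Real.rpow_lt_rpow_iff diam_nonneg (hr_pos n).le hd, hr_pow]
    exact lt_add_of_pos_right _ (NNReal.coe_pos.2 (hε'_pos n))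
  have hball : ∀ n, ∃ x, t n ⊆ ball x (r n) := fun n => by
    rcases (t n).eq_empty_or_nonempty with he | ⟨y, hy⟩
    · exact ⟨Classical.arbitrary X, he ▸ empty_subset _⟩
    · exact ⟨y, fun z hz => (dist_le_diam_of_mem isBounded_of_compactSpace hz hy).trans_lt
        (hdiam_lt n)⟩
  choose x hx using hball
  obtain ⟨I, hI⟩ := isCompact_univ.elim_finite_subcover (fun n => ball (x n) (r n))
    (fun _ => isOpen_ball) (ht.trans (iUnion_mono hx))
  calc ENNReal.ofReal c ≤ ENNReal.ofReal (∑ n ∈ I, r n ^ d) :=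
        ENNReal.ofReal_le_ofReal (h I x r hr_pos hI)
    _ = ∑ n ∈ I, ENNReal.ofReal (r n ^ d) :=
        ENNReal.ofReal_sum_of_nonneg fun n _ => (Real.rpow_pos_of_pos (hr_pos n) d).le
    _ ≤ ∑' n, ENNReal.ofReal (r n ^ d) := ENNReal.sum_le_tsum I
    _ = ∑' n, (ENNReal.ofReal (diam (t n) ^ d) + ε' n) := tsum_congr fun n => by
        rw [hr_pow, ENNReal.ofReal_add (by positivity) (NNReal.coe_nonneg _),
          ENNReal.ofReal_coe_nnreal]
    _ = ∑' n, ENNReal.ofReal (diam (t n) ^ d) + ∑' n, (ε' n : ℝ≥0∞) := ENNReal.tsum_add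
    _ ≤ ∑' n, (⨆ _ : (t n).Nonempty, ediam (t n) ^ d) + ε :=
        add_le_add (ENNReal.tsum_le_tsum fun _ =>
          ofReal_diam_rpow_le_iSup_ediam_rpow isBounded_of_compactSpace hd) hε'_sum.le

theorem div_two_rpow_le_sum_rpow_of_ball_cover {X P : Type*} [PseudoMetricSpace X]
    {cyl : P → Set X} {c d : ℝ} (hd : 0 ≤ d)
    (hball : ∀ (x : X) (ρ : ℝ), 0 < ρ → ∃ γ, closedBall x ρ = cyl γ)
    (hcover : ∀ F : Finset P, univ ⊆ ⋃ γ ∈ F, cyl γ → c ≤ ∑ γ ∈ F, diam (cyl γ) ^ d)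
    (I : Finset ℕ) (x : ℕ → X) (r : ℕ → ℝ) (hr : ∀ n, 0 < r n)
    (hI : univ ⊆ ⋃ n ∈ I, ball (x n) (r n)) :
    c / 2 ^ d ≤ ∑ n ∈ I, r n ^ d := by
  classical
  choose γ hγ using fun n => hball (x n) (r n) (hr n)
  have hcyl : univ ⊆ ⋃ η ∈ I.image γ, cyl η := hI.trans <| iUnion₂_subset fun n hn =>
    ball_subset_closedBall.trans <|
      (hγ n).trans_subset (subset_biUnion_of_mem (mem_image_of_mem γ hn))
  rw [div_le_iff₀ (by positivity), sum_mul]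
  calc c ≤ ∑ η ∈ I.image γ, diam (cyl η) ^ d := hcover _ hcyl
    _ ≤ ∑ n ∈ I, diam (cyl (γ n)) ^ d := sum_image_le_of_nonneg fun _ _ => by positivity
    _ ≤ ∑ n ∈ I, (2 * r n) ^ d := by
      gcongr with n
      exact hγ n ▸ diam_closedBall (hr n).le
    _ = ∑ n ∈ I, r n ^ d * 2 ^ d := by
      simp_rw [Real.mul_rpow zero_le_two (hr _).le, mul_comm]

theorem stmt6_general {C : Type*} [MetricSpace C] [CompactSpace C]
    (P : Type) (root : P) (ext : P → Finset P) (cyl : P → Set C)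
    (hroot : cyl root = Set.univ)
    (hne : ∀ γ, (cyl γ).Nonempty)
    (hreach : ∀ γ : P, Relation.ReflTransGen (fun a b => b ∈ ext a) root γ)
    (hdisj : ∀ γ, (↑(ext γ) : Set P).PairwiseDisjoint cyl)
    (hpart : ∀ γ, (⋃ η ∈ ext γ, cyl η) = cyl γ)
    (hball : ∀ (x : C) (ρ : ℝ), 0 < ρ → ∃ γ, Metric.closedBall x ρ = cyl γ)
    (d : ℝ) (hd : 0 < d)
    (hgrow : ∀ γ, Metric.diam (cyl γ) ^ d < ∑ η ∈ ext γ, Metric.diam (cyl η) ^ d)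
    (hdiamC : 0 < Metric.diam (Set.univ : Set C)) :
    (∀ F : Finset P, (↑F : Set P).PairwiseDisjoint cyl → (⋃ γ ∈ F, cyl γ) = Set.univ →
      Metric.diam (Set.univ : Set C) ^ d ≤ ∑ γ ∈ F, Metric.diam (cyl γ) ^ d) ∧
    ENNReal.ofReal d ≤ dimH (Set.univ : Set C) := by
  have hcover (F : Finset P) (hF : univ ⊆ ⋃ γ ∈ F, cyl γ) :
      diam (univ : Set C) ^ d ≤ ∑ γ ∈ F, diam (cyl γ) ^ d := by
    rw [← hroot] at hF ⊢
    exact le_sum_of_cyl_subset_biUnion (diam · ^ d) (fun _ => by positivity) hne hdisj hpart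
      hgrow F root (fun η _ => hreach η) hF
  refine ⟨fun F _ hF => hcover F hF.superset, ?_⟩
  have : Nonempty C := (hne root).to_subtype.map Subtype.val
  borelize C
  have hμH := ofReal_le_hausdorffMeasure_univ hd
    (div_two_rpow_le_sum_rpow_of_ball_cover hd.le hball hcover)
  lift d to ℝ≥0 using hd.le
  rw [ENNReal.ofReal_coe_nnreal]
  exact le_dimH_of_hausdorffMeasure_ne_zero
    ((ENNReal.ofReal_pos.2 (by positivity)).trans_le hμH).ne'

/-- In a compact ultrametric space whose balls are the cylinders of the finite paths of a
Bratteli diagram (one-step extensions of a path partition its cylinder), if for some `d > 0`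
every cylinder satisfies `diam([γ])^d < Σ_{η ∈ ext(γ)} diam([η])^d`, then every finite
partition of the space by cylinders satisfies `Σ diam^d ≥ diam(C)^d`; hence the `d`-dimensional
Hausdorff content is at least `diam(C)^d > 0` and `dim_H(C) ≥ d`. -/
theorem stmt6 {C : Type*} [MetricSpace C] [CompactSpace C]
    (hultra : ∀ x y z : C, dist x z ≤ max (dist x y) (dist y z))
    (P : Type) (root : P) (ext : P → Finset P) (cyl : P → Set C)
    (hroot : cyl root = Set.univ)
    (hne : ∀ γ, (cyl γ).Nonempty)
    (hreach : ∀ γ : P, Relation.ReflTransGen (fun a b => b ∈ ext a) root γ)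
    (hdisj : ∀ γ, (↑(ext γ) : Set P).PairwiseDisjoint cyl)
    (hpart : ∀ γ, (⋃ η ∈ ext γ, cyl η) = cyl γ)
    (hball : ∀ (x : C) (ρ : ℝ), 0 < ρ → ∃ γ, Metric.closedBall x ρ = cyl γ)
    (d : ℝ) (hd : 0 < d)
    (hgrow : ∀ γ, Metric.diam (cyl γ) ^ d < ∑ η ∈ ext γ, Metric.diam (cyl η) ^ d)
    (hdiamC : 0 < Metric.diam (Set.univ : Set C)) :
    (∀ F : Finset P, (↑F : Set P).PairwiseDisjoint cyl → (⋃ γ ∈ F, cyl γ) = Set.univ →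
      Metric.diam (Set.univ : Set C) ^ d ≤ ∑ γ ∈ F, Metric.diam (cyl γ) ^ d) ∧
    ENNReal.ofReal d ≤ dimH (Set.univ : Set C) :=
  stmt6_general P root ext cyl hroot hne hreach hdisj hpart hball d hd hgrow hdiamC
end

section
/- A regular self-similar ultrametric Cantor set with edge set of cardinality p and ultrametric parameter α ∈ (0,1) admits a bi-Lipschitz embedding into ℝⁿ whenever n > log(p)/(−log α); in particular it embeds bi-Lipschitz into ℝ^{⌊log(p)/(−log α)⌋ + 1}. -/
open Set

theorem abs_tsum_le_geometric_of_eq_zero {f : ℕ → ℝ} {r : ℝ} {k : ℕ} (hr0 : 0 ≤ r) (hr1 : r < 1)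
    (hf : ∀ j, |f j| ≤ r ^ j) (hz : ∀ j < k, f j = 0) :
    |∑' j, f j| ≤ r ^ k / (1 - r) := by
  have hsum : Summable f := .of_norm_bounded (summable_geometric_of_lt_one hr0 hr1) hf
  rw [← hsum.sum_add_tsum_nat_add k, Finset.sum_eq_zero fun j hj => hz j (Finset.mem_range.1 hj),
    zero_add]
  have htail : HasSum (fun j => r ^ (j + k)) (r ^ k / (1 - r)) := by
    simpa only [pow_add, mul_comm, div_eq_mul_inv] using
      (hasSum_geometric_of_lt_one hr0 hr1).mul_left (r ^ k)
  exact tsum_of_norm_bounded (f := fun j => f (j + k)) htail fun j => hf (j + k)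

theorem le_abs_tsum_of_leading_term {f : ℕ → ℝ} {r δ : ℝ} {k : ℕ} (hr0 : 0 ≤ r) (hr1 : r < 1)
    (hf : ∀ j, |f j| ≤ r ^ j) (hz : ∀ j < k, f j = 0) (hk : δ * r ^ k ≤ |f k|) :
    (δ - r / (1 - r)) * r ^ k ≤ |∑' j, f j| := by
  classical
  have hsum : Summable f := .of_norm_bounded (summable_geometric_of_lt_one hr0 hr1) hf
  have htail : |∑' j, ite (j = k) 0 (f j)| ≤ r ^ (k + 1) / (1 - r) := by
    refine abs_tsum_le_geometric_of_eq_zero hr0 hr1 (fun j => ?_) fun j hj => ?_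
    · split_ifs
      · simpa using pow_nonneg hr0 j
      · exact hf j
    · rcases Nat.lt_succ_iff_lt_or_eq.1 hj with hj | rfl
      · simp [hz j hj]
      · simp
  rw [hsum.tsum_eq_add_tsum_ite k]
  calc (δ - r / (1 - r)) * r ^ k = δ * r ^ k - r ^ (k + 1) / (1 - r) := by ring
    _ ≤ |f k| - |∑' j, ite (j = k) 0 (f j)| := by gcongr
    _ ≤ |f k + ∑' j, ite (j = k) 0 (f j)| := by
      simpa using abs_sub_abs_le_abs_sub (f k) (-∑' j, ite (j = k) 0 (f j))

noncomputable def interleavingMap {E : Type*} (β : E → ℝ) (n : ℕ) (α : ℝ) (x : ℕ → E)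
    (i : Fin n) : ℝ :=
  ∑' j, β (x (i + n * j)) * α ^ (n * j)

section interleavingMap

variable {E : Type*} {β : E → ℝ} {n : ℕ} {α : ℝ}

theorem interleavingMap_sub_interleavingMap (hβ : ∀ e, β e ∈ Icc 0 1) (hα0 : 0 ≤ α)
    (hα1 : α < 1) (x y : ℕ → E) (i : Fin n) :
    interleavingMap β n α x i - interleavingMap β n α y i =
      ∑' j, (β (x (i + n * j)) - β (y (i + n * j))) * (α ^ n) ^ j := by
  have hgeo := summable_geometric_of_lt_one (pow_nonneg hα0 n)
    (pow_lt_one₀ hα0 hα1 (Fin.pos i).ne')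
  have hsum (z : ℕ → E) : Summable fun j => β (z (i + n * j)) * α ^ (n * j) := by
    refine .of_norm_bounded hgeo fun j => ?_
    rw [Real.norm_eq_abs, abs_mul, abs_of_nonneg (hβ _).1, abs_of_nonneg (by positivity), pow_mul]
    exact mul_le_of_le_one_left (by positivity) (hβ _).2
  rw [interleavingMap, interleavingMap, ← (hsum x).tsum_sub (hsum y)]
  simp only [pow_mul, sub_mul]

theorem abs_digit_sub_mul_le (hβ : ∀ e, β e ∈ Icc 0 1) {r : ℝ} (hr : 0 ≤ r) (a b : E) (j : ℕ) :
    |(β a - β b) * r ^ j| ≤ r ^ j := by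
  rw [abs_mul, abs_of_nonneg (pow_nonneg hr j)]
  refine mul_le_of_le_one_left (pow_nonneg hr j) (abs_sub_le_iff.2 ⟨?_, ?_⟩) <;>
    linarith [(hβ a).1, (hβ a).2, (hβ b).1, (hβ b).2]

theorem abs_interleavingMap_sub_le (hβ : ∀ e, β e ∈ Icc 0 1) (hα0 : 0 ≤ α) (hα1 : α < 1)
    {x y : ℕ → E} {m : ℕ} (hxy : ∀ k < m, x k = y k) (i : Fin n) :
    |interleavingMap β n α x i - interleavingMap β n α y i| ≤ (α ^ n) ^ (m / n) / (1 - α ^ n) := by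
  rw [interleavingMap_sub_interleavingMap hβ hα0 hα1]
  refine abs_tsum_le_geometric_of_eq_zero (pow_nonneg hα0 n)
    (pow_lt_one₀ hα0 hα1 (Fin.pos i).ne')
    (fun j => abs_digit_sub_mul_le hβ (pow_nonneg hα0 n) _ _ j) fun j hj => ?_
  have h1 := Nat.mul_le_mul_left n (Nat.succ_le_of_lt hj)
  have h2 := Nat.mul_div_le m n
  rw [hxy _ (by rw [Nat.mul_succ] at h1; omega), sub_self, zero_mul]

theorem le_abs_interleavingMap_sub {δ : ℝ} (hβ : ∀ e, β e ∈ Icc 0 1)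
    (hgap : ∀ e e', e ≠ e' → δ ≤ |β e - β e'|) (hα0 : 0 ≤ α) (hα1 : α < 1) (hn : 0 < n)
    {x y : ℕ → E} {m : ℕ} (hxy : ∀ k < m, x k = y k) (hm : x m ≠ y m) :
    (δ - α ^ n / (1 - α ^ n)) * (α ^ n) ^ (m / n) ≤
      |interleavingMap β n α x ⟨m % n, Nat.mod_lt m hn⟩ -
        interleavingMap β n α y ⟨m % n, Nat.mod_lt m hn⟩| := by
  have hdiv := Nat.mod_add_div m n
  rw [interleavingMap_sub_interleavingMap hβ hα0 hα1]
  refine le_abs_tsum_of_leading_term (pow_nonneg hα0 n) (pow_lt_one₀ hα0 hα1 hn.ne')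
    (fun j => abs_digit_sub_mul_le hβ (pow_nonneg hα0 n) _ _ j) (fun j hj => ?_) ?_
  · have h1 := Nat.mul_le_mul_left n (Nat.succ_le_of_lt hj)
    rw [hxy _ (by rw [Nat.mul_succ] at h1; omega), sub_self, zero_mul]
  · rw [hdiv, abs_mul, abs_of_nonneg (pow_nonneg (pow_nonneg hα0 n) _)]
    exact mul_le_mul_of_nonneg_right (hgap _ _ hm) (by positivity)

theorem dist_interleavingMap_le (hβ : ∀ e, β e ∈ Icc 0 1) (hα : α ∈ Ioo 0 1) (hn : 0 < n)
    {x y : ℕ → E} {m : ℕ} (hxy : ∀ k < m, x k = y k) :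
    dist (interleavingMap β n α x) (interleavingMap β n α y) ≤
      (α ^ (n - 1) * (1 - α ^ n))⁻¹ * α ^ m := by
  obtain ⟨hα0, hα1⟩ := hα
  have hr1 : 0 < 1 - α ^ n := sub_pos.2 (pow_lt_one₀ hα0.le hα1 hn.ne')
  refine (dist_pi_le_iff (by positivity)).2 fun i => ?_
  rw [Real.dist_eq]
  refine (abs_interleavingMap_sub_le hβ hα0.le hα1 hxy i).trans ?_
  have hexp : α ^ (n * (m / n)) * α ^ (n - 1) ≤ α ^ m := by
    rw [← pow_add]
    have hmod := Nat.mod_lt m hn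
    have hdiv := Nat.mod_add_div m n
    exact pow_le_pow_of_le_one hα0.le hα1.le (by omega)
  calc (α ^ n) ^ (m / n) / (1 - α ^ n) ≤ α ^ m / α ^ (n - 1) / (1 - α ^ n) := by
        rw [← pow_mul]
        gcongr
        rwa [le_div_iff₀ (by positivity)]
    _ = (α ^ (n - 1) * (1 - α ^ n))⁻¹ * α ^ m := by field_simp

theorem le_dist_interleavingMap {δ : ℝ} (hβ : ∀ e, β e ∈ Icc 0 1)
    (hgap : ∀ e e', e ≠ e' → δ ≤ |β e - β e'|) (hα : α ∈ Ioo 0 1) (hn : 0 < n)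
    (hδ : α ^ n / (1 - α ^ n) < δ) {x y : ℕ → E} {m : ℕ} (hxy : ∀ k < m, x k = y k)
    (hm : x m ≠ y m) :
    (δ - α ^ n / (1 - α ^ n)) * α ^ m ≤
      dist (interleavingMap β n α x) (interleavingMap β n α y) := by
  obtain ⟨hα0, hα1⟩ := hα
  have hexp : α ^ m ≤ (α ^ n) ^ (m / n) := by
    rw [← pow_mul]
    exact pow_le_pow_of_le_one hα0.le hα1.le (Nat.mul_div_le m n)
  calc (δ - α ^ n / (1 - α ^ n)) * α ^ m ≤ (δ - α ^ n / (1 - α ^ n)) * (α ^ n) ^ (m / n) :=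
        mul_le_mul_of_nonneg_left hexp (sub_nonneg.2 hδ.le)
    _ ≤ _ := le_abs_interleavingMap_sub hβ hgap hα0.le hα1 hn hxy hm
    _ ≤ _ := by rw [← Real.dist_eq]; exact dist_le_pi_dist _ _ _

end interleavingMap

def IsBiLipschitz {X Y : Type*} [MetricSpace X] [MetricSpace Y] (F : X → Y) : Prop :=
  ∃ cm cp : ℝ, 0 < cm ∧ cm ≤ cp ∧
    ∀ x y, cm * dist x y ≤ dist (F x) (F y) ∧ dist (F x) (F y) ≤ cp * dist x y

section IsBiLipschitz

variable {X Y Z : Type*} [MetricSpace X] [MetricSpace Y] [MetricSpace Z]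

theorem IsBiLipschitz.of_bounds {F : X → Y} {cm cp : ℝ} (hcm : 0 < cm)
    (h : ∀ x y, cm * dist x y ≤ dist (F x) (F y) ∧ dist (F x) (F y) ≤ cp * dist x y) :
    IsBiLipschitz F :=
  ⟨cm, max cm cp, hcm, le_max_left _ _, fun x y =>
    ⟨(h x y).1, (h x y).2.trans (by gcongr; exact le_max_right _ _)⟩⟩

theorem IsBiLipschitz.comp {F : X → Y} {G : Y → Z} {K K' : NNReal} (hF : IsBiLipschitz F)
    (hG : LipschitzWith K G) (hG' : AntilipschitzWith K' G) (hK' : K' ≠ 0) :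
    IsBiLipschitz (G ∘ F) := by
  obtain ⟨cm, cp, hcm, -, h⟩ := hF
  refine .of_bounds (cm := K'⁻¹ * cm) (cp := K * cp) (by positivity) fun x y => ⟨?_, ?_⟩
  · calc (K'⁻¹ * cm : ℝ) * dist x y ≤ K'⁻¹ * dist (F x) (F y) := by
          rw [mul_assoc]; gcongr; exact (h x y).1
      _ ≤ dist (G (F x)) (G (F y)) := hG'.mul_le_dist _ _
  · calc dist (G (F x)) (G (F y)) ≤ K * dist (F x) (F y) := hG.dist_le_mul _ _
      _ ≤ K * cp * dist x y := by rw [mul_assoc]; gcongr; exact (h x y).2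

theorem IsBiLipschitz.toLp {ι : Type*} [Fintype ι] {F : X → ι → ℝ} (hF : IsBiLipschitz F) :
    IsBiLipschitz fun x => WithLp.toLp 2 (F x) :=
  hF.comp (PiLp.lipschitzWith_toLp 2 _) (PiLp.antilipschitzWith_toLp 2 _) one_ne_zero

end IsBiLipschitz

namespace SPath

variable {Ed V : Type} {σ τ : Ed → V}

theorem apply_eq_of_lt_slcp (x y : SPath Ed σ τ) : ∀ k < slcp x y, x.1 k = y.1 k :=
  fun _ hk => not_not.1 fun h => (Nat.sInf_le h).not_gt hk

theorem apply_slcp_ne {x y : SPath Ed σ τ} (hxy : x ≠ y) : x.1 (slcp x y) ≠ y.1 (slcp x y) :=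
  Nat.sInf_mem (Function.ne_iff.1 fun h => hxy (Subtype.ext h))

end SPath

theorem isBiLipschitz_interleavingMap {V Ed : Type} {σ τ : Ed → V} [MetricSpace (SPath Ed σ τ)]
    {α δ : ℝ} (hdist : ∀ x y : SPath Ed σ τ, x ≠ y → dist x y = α ^ slcp x y)
    {β : Ed → ℝ} (hβ : ∀ e, β e ∈ Icc 0 1) (hgap : ∀ e e', e ≠ e' → δ ≤ |β e - β e'|)
    (hα : α ∈ Ioo 0 1) {n : ℕ} (hn : 0 < n) (hδ : α ^ n / (1 - α ^ n) < δ) :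
    IsBiLipschitz fun x : SPath Ed σ τ => interleavingMap β n α x.1 := by
  refine .of_bounds (cp := (α ^ (n - 1) * (1 - α ^ n))⁻¹) (sub_pos.2 hδ) fun x y => ?_
  rcases eq_or_ne x y with rfl | hxy
  · simp
  have hagree := SPath.apply_eq_of_lt_slcp x y
  rw [hdist x y hxy]
  exact ⟨le_dist_interleavingMap hβ hgap hα hn hδ hagree (SPath.apply_slcp_ne hxy),
    dist_interleavingMap_le hβ hα hn hagree⟩

/-- Gap `1 / (p - 1)` against spread `1` gives the optimal ratio `1 / p` for the digit condition
of `isBiLipschitz_interleavingMap`. -/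
noncomputable def uniformDigits (E : Type*) [Fintype E] (e : E) : ℝ :=
  (Fintype.equivFin E e : ℝ) / (Fintype.card E - 1)

section uniformDigits

variable {E : Type*} [Fintype E]

theorem uniformDigits_mem_Icc (e : E) : uniformDigits E e ∈ Icc 0 1 := by
  have h : ((Fintype.equivFin E e : ℕ) : ℝ) + 1 ≤ Fintype.card E := by
    exact_mod_cast (Fintype.equivFin E e).2
  exact ⟨div_nonneg (Nat.cast_nonneg _) (by linarith),
    div_le_one_of_le₀ (by linarith) (by linarith)⟩

theorem one_div_card_sub_one_le_abs_uniformDigits_sub {e e' : E} (h : e ≠ e') :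
    1 / ((Fintype.card E : ℝ) - 1) ≤ |uniformDigits E e - uniformDigits E e'| := by
  have hcard : ((Fintype.equivFin E e : ℕ) : ℝ) + 1 ≤ Fintype.card E := by
    exact_mod_cast (Fintype.equivFin E e).2
  have hne : ((Fintype.equivFin E e : ℕ) : ℤ) ≠ (Fintype.equivFin E e' : ℕ) := by
    exact_mod_cast fun h' => h ((Fintype.equivFin E).injective (Fin.ext h'))
  have hone : (1 : ℝ) ≤ |((Fintype.equivFin E e : ℕ) : ℝ) - (Fintype.equivFin E e' : ℕ)| := by
    exact_mod_cast Int.one_le_abs (sub_ne_zero.2 hne)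
  rw [uniformDigits, uniformDigits, ← sub_div, abs_div,
    abs_of_nonneg (by linarith : (0 : ℝ) ≤ Fintype.card E - 1)]
  gcongr
  linarith [Nat.cast_nonneg (α := ℝ) (Fintype.equivFin E e : ℕ)]

end uniformDigits

theorem pow_lt_inv_of_log_div_lt {α : ℝ} (hα : α ∈ Ioo 0 1) {p : ℝ} (hp : 0 < p) {n : ℕ}
    (hn : Real.log p / (-Real.log α) < n) : α ^ n < p⁻¹ := by
  have hlogα : Real.log α < 0 := Real.log_neg hα.1 hα.2
  rw [div_lt_iff₀ (by linarith)] at hn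
  rw [← Real.log_lt_log_iff (pow_pos hα.1 n) (inv_pos.2 hp), Real.log_pow, Real.log_inv]
  linarith

theorem div_one_sub_lt_one_div_sub_one {r p : ℝ} (hp : 1 < p) (hr : r < p⁻¹) :
    r / (1 - r) < 1 / (p - 1) := by
  have hrp : r * p < 1 := by
    simpa [(by linarith : p ≠ 0)] using mul_lt_mul_of_pos_right hr (by linarith : 0 < p)
  have hr1 : r < 1 := hr.trans (inv_lt_one_of_one_lt₀ hp)
  rw [div_lt_div_iff₀ (by linarith) (by linarith)]
  linarith

/-- A regular self-similar ultrametric Cantor set with edge set of cardinality `p` and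
parameter `α ∈ (0,1)` embeds bi-Lipschitz into `ℝⁿ` whenever `n > log p / (−log α)`;
in particular into `ℝ^{⌊log p /(−log α)⌋ + 1}`. -/
theorem stmt8 {V Ed : Type} [Fintype Ed] (σ τ : Ed → V)
    (α : ℝ) (hα : α ∈ Set.Ioo (0 : ℝ) 1)
    (p : ℕ) (hp : p = Fintype.card Ed) (hp2 : 2 ≤ p)
    [MetricSpace (SPath Ed σ τ)]
    (hdist : ∀ x y : SPath Ed σ τ, x ≠ y → dist x y = α ^ slcp x y) :
    (∀ n : ℕ, Real.log p / (-Real.log α) < n →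
      ∃ F : SPath Ed σ τ → EuclideanSpace ℝ (Fin n), ∃ cm cp : ℝ, 0 < cm ∧ cm ≤ cp ∧
        ∀ x y, cm * dist x y ≤ dist (F x) (F y) ∧ dist (F x) (F y) ≤ cp * dist x y) ∧
    (∃ F : SPath Ed σ τ →
        EuclideanSpace ℝ (Fin (Nat.floor (Real.log p / (-Real.log α)) + 1)),
      ∃ cm cp : ℝ, 0 < cm ∧ cm ≤ cp ∧
        ∀ x y, cm * dist x y ≤ dist (F x) (F y) ∧ dist (F x) (F y) ≤ cp * dist x y) := by
  have hp1 : (1 : ℝ) < p := by exact_mod_cast hp2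
  have key (n : ℕ) (hn : Real.log p / (-Real.log α) < n) :
      IsBiLipschitz fun x : SPath Ed σ τ =>
        WithLp.toLp 2 (interleavingMap (uniformDigits Ed) n α x.1) := by
    have hn0 : 0 < n := by
      have hthreshold : 0 < Real.log p / (-Real.log α) :=
        div_pos (Real.log_pos hp1) (neg_pos.2 (Real.log_neg hα.1 hα.2))
      exact_mod_cast hthreshold.trans hn
    have hδ := div_one_sub_lt_one_div_sub_one hp1 (pow_lt_inv_of_log_div_lt hα (by linarith) hn)
    rw [hp] at hδ
    exact (isBiLipschitz_interleavingMap hdist uniformDigits_mem_Icc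
      (fun _ _ => one_div_card_sub_one_le_abs_uniformDigits_sub) hα hn0 hδ).toLp
  exact ⟨fun n hn => ⟨_, key n hn⟩, ⟨_, key _ (by push_cast; exact Nat.lt_floor_add_one _)⟩⟩
end

section
/- The canonical transversal Ξ of a primitive substitution tiling of ℝ^d, with ultrametric given by weights w(γ) = (ν_{r(γ)})^{1/d}·Λ^{−|γ|/d}, has Hausdorff dimension equal to d, and d is also the abscissa of convergence of its zeta function ζ(s) = Σ_γ diam([γ])^s. -/
/-- The finite paths of length `n` in a stationary Bratteli diagram. -/
def FinPath (Ed : Type) {V : Type} (σ τ : Ed → V) (n : ℕ) : Type :=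
  {γ : Fin n → Ed // ∀ i j : Fin n, (j : ℕ) = (i : ℕ) + 1 → τ (γ i) = σ (γ j)}

open Finset
open scoped ENNReal NNReal Classical

theorem pow_pow_eq_inv {α Λ : ℝ} {d : ℕ} (hαd : α ^ d = Λ⁻¹) (n : ℕ) :
    (α ^ n) ^ d = (Λ ^ n)⁻¹ := by
  rw [← pow_mul, mul_comm, pow_mul, hαd, inv_pow]

theorem sum_fin_succ_pi {α M : Type*} [Fintype α] [AddCommMonoid M] {n : ℕ}
    (f : (Fin (n + 1) → α) → M) :
    ∑ δ, f δ = ∑ γ : Fin n → α, ∑ a, f (Fin.snoc γ a) := by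
  rw [← (Fin.snocEquiv fun _ => α).sum_comp, Fintype.sum_prod_type_right]
  rfl

section Mass

variable {V Ed : Type} {σ τ : Ed → V} {ν : V → ℝ} {Λ : ℝ}

def IsFinPath (σ τ : Ed → V) {n : ℕ} (γ : Fin n → Ed) : Prop :=
  ∀ i j : Fin n, (j : ℕ) = (i : ℕ) + 1 → τ (γ i) = σ (γ j)

/-- The empty path gets weight `1 = ∑ v, ν v`, which makes the masses consistent at level `0`. -/
def endWeight (τ : Ed → V) (ν : V → ℝ) : {n : ℕ} → (Fin n → Ed) → ℝ
  | 0, _ => 1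
  | n + 1, γ => ν (τ (γ (Fin.last n)))

noncomputable def pathMass (σ τ : Ed → V) (ν : V → ℝ) (Λ : ℝ) {n : ℕ} (γ : Fin n → Ed) : ℝ :=
  if IsFinPath σ τ γ then endWeight τ ν γ / Λ ^ n else 0

theorem endWeight_eq_one_or (τ : Ed → V) (ν : V → ℝ) {n : ℕ} (γ : Fin n → Ed) :
    endWeight τ ν γ = 1 ∨ ∃ v, endWeight τ ν γ = ν v := by
  cases n
  · exact .inl rfl
  · exact .inr ⟨_, rfl⟩

theorem endWeight_le_one (hν1 : ∀ v, ν v ≤ 1) {n : ℕ} (γ : Fin n → Ed) :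
    endWeight τ ν γ ≤ 1 := by
  obtain h | ⟨v, h⟩ := endWeight_eq_one_or τ ν γ <;> rw [h]
  exact hν1 v

theorem le_endWeight {a : ℝ} (ha1 : a ≤ 1) (ha : ∀ v, a ≤ ν v) {n : ℕ} (γ : Fin n → Ed) :
    a ≤ endWeight τ ν γ := by
  obtain h | ⟨v, h⟩ := endWeight_eq_one_or τ ν γ <;> rw [h]
  exacts [ha1, ha v]

@[simp]
theorem endWeight_snoc {n : ℕ} (γ : Fin n → Ed) (e : Ed) :
    endWeight τ ν (Fin.snoc γ e : Fin (n + 1) → Ed) = ν (τ e) := by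
  simp [endWeight]

theorem isFinPath_snoc {n : ℕ} {γ : Fin n → Ed} {e : Ed} :
    IsFinPath σ τ (Fin.snoc γ e : Fin (n + 1) → Ed) ↔
      IsFinPath σ τ γ ∧ ∀ i : Fin n, (i : ℕ) + 1 = n → τ (γ i) = σ e := by
  constructor
  · intro h
    refine ⟨fun i j hij => ?_, fun i hi => ?_⟩
    · simpa using h i.castSucc j.castSucc hij
    · simpa using h i.castSucc (Fin.last n) hi.symm
  · rintro ⟨hγ, hlast⟩ i j hij
    induction i using Fin.lastCases with
    | last => simp at hij; omega
    | cast i =>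
      induction j using Fin.lastCases with
      | last => simpa using hlast i (by simpa using hij.symm)
      | cast j => simpa using hγ i j (by simpa using hij)

theorem pathMass_nonneg (hΛ : 0 < Λ) (hν : ∀ v, 0 ≤ ν v) {n : ℕ} (γ : Fin n → Ed) :
    0 ≤ pathMass σ τ ν Λ γ := by
  unfold pathMass
  split_ifs
  · exact div_nonneg (le_endWeight zero_le_one hν γ) (by positivity)
  · rfl

theorem pathMass_le_inv_pow (hΛ : 0 < Λ) (hν1 : ∀ v, ν v ≤ 1) {n : ℕ} (γ : Fin n → Ed) :
    pathMass σ τ ν Λ γ ≤ (Λ ^ n)⁻¹ := by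
  unfold pathMass
  split_ifs
  · exact (div_le_div_of_nonneg_right (endWeight_le_one hν1 γ) (by positivity)).trans_eq
      (one_div _)
  · positivity

theorem exists_source_eq [Fintype Ed] (hΛ : 0 < Λ) (hν : ∀ v, 0 < ν v)
    (hedge : ∀ v, ∑ e with σ e = v, ν (τ e) = Λ * ν v) (v : V) : ∃ e, σ e = v := by
  by_contra! h
  have := hedge v
  simp only [h, filter_false, sum_empty] at this
  exact (mul_pos hΛ (hν v)).ne this

variable [Fintype V] [Fintype Ed]

theorem sum_filter_source_eq_of_mulVec_eq {A : Matrix V V ℕ}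
    (hA : ∀ v v', A v v' = Nat.card {e : Ed // σ e = v ∧ τ e = v'})
    (hPF : (A.map (Nat.cast : ℕ → ℝ)).mulVec ν = Λ • ν) (v : V) :
    ∑ e with σ e = v, ν (τ e) = Λ * ν v := by
  rw [← sum_fiberwise _ τ, ← smul_eq_mul, ← Pi.smul_apply, ← hPF]
  refine sum_congr rfl fun v' _ => ?_
  rw [sum_congr rfl fun e he => congrArg ν (mem_filter.1 he).2, sum_const, filter_filter,
    nsmul_eq_mul]
  simp [hA, Fintype.card_subtype]

theorem sum_link_endWeight
    (hedge : ∀ v, ∑ e with σ e = v, ν (τ e) = Λ * ν v) (hνsum : ∑ v, ν v = 1)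
    {n : ℕ} (γ : Fin n → Ed) :
    (∑ e, if ∀ i : Fin n, (i : ℕ) + 1 = n → τ (γ i) = σ e then ν (τ e) else 0) =
      Λ * endWeight τ ν γ := by
  cases n with
  | zero =>
    have : ∑ e, ν (τ e) = ∑ v, ∑ e with σ e = v, ν (τ e) := (sum_fiberwise _ _ _).symm
    simp [endWeight, this, hedge, ← mul_sum, hνsum]
  | succ n =>
    have hlink (e : Ed) : (∀ i : Fin (n + 1), (i : ℕ) + 1 = n + 1 → τ (γ i) = σ e) ↔
        σ e = τ (γ (Fin.last n)) := by
      refine ⟨fun h => (h (Fin.last n) rfl).symm, fun h i hi => ?_⟩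
      rw [show i = Fin.last n from Fin.ext (by simpa using hi), h]
    simp only [hlink, ← sum_filter, hedge, endWeight]

theorem sum_pathMass_snoc (hΛ : Λ ≠ 0)
    (hedge : ∀ v, ∑ e with σ e = v, ν (τ e) = Λ * ν v) (hνsum : ∑ v, ν v = 1)
    {n : ℕ} (γ : Fin n → Ed) :
    ∑ e, pathMass σ τ ν Λ (Fin.snoc γ e : Fin (n + 1) → Ed) = pathMass σ τ ν Λ γ := by
  unfold pathMass
  by_cases hγ : IsFinPath σ τ γ
  · have := sum_link_endWeight hedge hνsum γ
    simp only [isFinPath_snoc, hγ, true_and, endWeight_snoc, if_true]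
    calc _ = (∑ e, if ∀ i : Fin n, (i : ℕ) + 1 = n → τ (γ i) = σ e then ν (τ e) else 0) /
          Λ ^ (n + 1) := by simp only [sum_div, ite_div, zero_div]
      _ = _ := by rw [this, pow_succ']; field_simp
  · simp [isFinPath_snoc, hγ]

theorem sum_pathMass_init (hΛ : Λ ≠ 0)
    (hedge : ∀ v, ∑ e with σ e = v, ν (τ e) = Λ * ν v) (hνsum : ∑ v, ν v = 1)
    {n : ℕ} (p : (Fin n → Ed) → Prop) [DecidablePred p] :
    (∑ δ : Fin (n + 1) → Ed, if p (Fin.init δ) then pathMass σ τ ν Λ δ else 0) =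
      ∑ γ : Fin n → Ed, if p γ then pathMass σ τ ν Λ γ else 0 := by
  simp only [sum_fin_succ_pi, Fin.init_snoc, sum_ite_irrel, sum_const_zero,
    sum_pathMass_snoc hΛ hedge hνsum]

theorem sum_pathMass (hΛ : Λ ≠ 0)
    (hedge : ∀ v, ∑ e with σ e = v, ν (τ e) = Λ * ν v) (hνsum : ∑ v, ν v = 1) (n : ℕ) :
    ∑ γ : Fin n → Ed, pathMass σ τ ν Λ γ = 1 := by
  induction n with
  | zero => simp [pathMass, IsFinPath, endWeight]
  | succ n ih => simpa [ih] using sum_pathMass_init hΛ hedge hνsum (n := n) fun _ => True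

theorem sum_pathMass_take (hΛ : Λ ≠ 0)
    (hedge : ∀ v, ∑ e with σ e = v, ν (τ e) = Λ * ν v) (hνsum : ∑ v, ν v = 1)
    {n : ℕ} (γ : Fin n → Ed) {N : ℕ} (h : n ≤ N) :
    (∑ δ : Fin N → Ed, if Fin.take n h δ = γ then pathMass σ τ ν Λ δ else 0) =
      pathMass σ τ ν Λ γ := by
  induction N, h using Nat.le_induction with
  | base => simp [Fin.take_eq_self]
  | succ N hN ih =>
    rw [← ih, ← sum_pathMass_init hΛ hedge hνsum (n := N)]
    rfl

noncomputable instance (n : ℕ) : Fintype (FinPath Ed σ τ n) :=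
  inferInstanceAs (Fintype {γ : Fin n → Ed // IsFinPath σ τ γ})

theorem sum_finPath_endWeight_div (hΛ : Λ ≠ 0)
    (hedge : ∀ v, ∑ e with σ e = v, ν (τ e) = Λ * ν v) (hνsum : ∑ v, ν v = 1) (n : ℕ) :
    ∑ γ : FinPath Ed σ τ n, endWeight τ ν γ.1 / Λ ^ n = 1 := by
  rw [← sum_pathMass hΛ hedge hνsum n]
  unfold pathMass
  rw [← sum_filter]
  change ∑ γ : {γ : Fin n → Ed // IsFinPath σ τ γ}, endWeight τ ν γ.1 / Λ ^ n = _
  exact (sum_subtype {γ | IsFinPath σ τ γ} (by simp) fun γ => endWeight τ ν γ / Λ ^ n).symm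

end Mass

section Prefix

variable {V Ed : Type} {σ τ : Ed → V}

def pref (x : SPath Ed σ τ) (n : ℕ) : Fin n → Ed := fun i => x.1 i

def pathCylinder (σ τ : Ed → V) {n : ℕ} (γ : Fin n → Ed) : Set (SPath Ed σ τ) := {x | pref x n = γ}

theorem exists_subset_pathCylinder_of_subsingleton [Nonempty (SPath Ed σ τ)]
    {t : Set (SPath Ed σ τ)} (ht : t.Subsingleton) (n : ℕ) :
    ∃ x : SPath Ed σ τ, t ⊆ pathCylinder σ τ (pref x n) := by
  obtain rfl | ⟨x, rfl⟩ := ht.eq_empty_or_singleton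
  exacts [⟨Classical.arbitrary _, Set.empty_subset _⟩, ⟨x, Set.singleton_subset_iff.2 rfl⟩]

theorem isFinPath_pref (x : SPath Ed σ τ) (n : ℕ) : IsFinPath σ τ (pref x n) := by
  intro i j hij
  simp only [pref, hij]
  exact x.2 i

def extendPath (τ : Ed → V) (nxt : V → Ed) (v₀ : V) {N : ℕ} (γ : Fin N → Ed) : ℕ → Ed
  | 0 => if h : 0 < N then γ ⟨0, h⟩ else nxt v₀
  | i + 1 => if h : i + 1 < N then γ ⟨i + 1, h⟩ else nxt (τ (extendPath τ nxt v₀ γ i))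

theorem extendPath_of_lt (nxt : V → Ed) (v₀ : V) {N : ℕ} (γ : Fin N → Ed) {i : ℕ} (h : i < N) :
    extendPath τ nxt v₀ γ i = γ ⟨i, h⟩ := by
  cases i <;> simp [extendPath, h]

theorem exists_pref_eq [Nonempty V] (hout : ∀ v, ∃ e, σ e = v) {N : ℕ} {γ : Fin N → Ed}
    (hγ : IsFinPath σ τ γ) : ∃ x : SPath Ed σ τ, pref x N = γ := by
  choose nxt hnxt using hout
  refine ⟨⟨extendPath τ nxt (Classical.arbitrary V) γ, fun i => ?_⟩,
    funext fun i => extendPath_of_lt _ _ γ i.2⟩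
  by_cases h : i + 1 < N
  · rw [extendPath_of_lt _ _ γ h, extendPath_of_lt _ _ γ (Nat.lt_of_succ_lt h)]
    exact hγ _ _ rfl
  · simp [extendPath, h, hnxt]

end Prefix

section PathMetric

variable {V Ed : Type} {σ τ : Ed → V}

theorem apply_eq_of_lt_slcp {x y : SPath Ed σ τ} {i : ℕ} (h : i < slcp x y) : x.1 i = y.1 i :=
  not_not.1 (Nat.notMem_of_lt_sInf h)

theorem pref_eq_iff_le_slcp {x y : SPath Ed σ τ} (hxy : x ≠ y) {n : ℕ} :
    pref x n = pref y n ↔ n ≤ slcp x y := by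
  refine ⟨fun h => le_csInf ?_ fun m hm => ?_,
    fun h => funext fun i => apply_eq_of_lt_slcp (i.2.trans_le h)⟩
  · exact Function.ne_iff.1 fun h' => hxy (Subtype.ext h')
  · by_contra! hmn
    exact hm (congrFun h ⟨m, hmn⟩)

variable [MetricSpace (SPath Ed σ τ)] {c α : ℝ}

theorem dist_le_of_pref_eq (hα0 : 0 ≤ α) (hα1 : α ≤ 1)
    (hub : ∀ x y : SPath Ed σ τ, x ≠ y → dist x y ≤ α ^ slcp x y)
    {x y : SPath Ed σ τ} {n : ℕ} (h : pref x n = pref y n) : dist x y ≤ α ^ n := by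
  rcases eq_or_ne x y with rfl | hxy
  · simpa using pow_nonneg hα0 n
  · exact (hub x y hxy).trans (pow_le_pow_of_le_one hα0 hα1 ((pref_eq_iff_le_slcp hxy).1 h))

theorem pref_eq_of_dist_lt (hα0 : 0 ≤ α) (hα1 : α ≤ 1) (hc : 0 ≤ c)
    (hlb : ∀ x y : SPath Ed σ τ, x ≠ y → c * α ^ slcp x y ≤ dist x y)
    {x y : SPath Ed σ τ} {n : ℕ} (h : dist x y < c * α ^ n) : pref x n = pref y n := by
  rcases eq_or_ne x y with rfl | hxy
  · rfl
  rw [pref_eq_iff_le_slcp hxy]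
  by_contra! hlt
  have := hlb x y hxy
  have := mul_le_mul_of_nonneg_left (pow_le_pow_of_le_one hα0 hα1 hlt.le) hc
  linarith

theorem isOpen_pathCylinder (hα0 : 0 < α) (hα1 : α ≤ 1) (hc : 0 < c)
    (hlb : ∀ x y : SPath Ed σ τ, x ≠ y → c * α ^ slcp x y ≤ dist x y)
    {n : ℕ} (γ : Fin n → Ed) : IsOpen (pathCylinder σ τ γ) := by
  refine Metric.isOpen_iff.2 fun x hx => ⟨c * α ^ n, by positivity, fun y hy => ?_⟩
  exact (pref_eq_of_dist_lt hα0.le hα1 hc.le hlb hy).trans hx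

theorem ediam_pathCylinder_le (hα0 : 0 ≤ α) (hα1 : α ≤ 1)
    (hub : ∀ x y : SPath Ed σ τ, x ≠ y → dist x y ≤ α ^ slcp x y)
    {n : ℕ} (γ : Fin n → Ed) : Metric.ediam (pathCylinder σ τ γ) ≤ ENNReal.ofReal (α ^ n) :=
  Metric.ediam_le fun x hx y hy => by
    rw [edist_dist]
    exact ENNReal.ofReal_le_ofReal (dist_le_of_pref_eq hα0 hα1 hub (hx.trans hy.symm))

theorem exists_subset_pathCylinder_ofReal_le_ediam
    (hlb : ∀ x y : SPath Ed σ τ, x ≠ y → c * α ^ slcp x y ≤ dist x y)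
    {t : Set (SPath Ed σ τ)} (ht : t.Nontrivial) :
    ∃ (x : SPath Ed σ τ) (n : ℕ), t ⊆ pathCylinder σ τ (pref x n) ∧
      ENNReal.ofReal (c * α ^ n) ≤ Metric.ediam t := by
  have hS : ∃ m, ∃ y ∈ t, ∃ z ∈ t, y ≠ z ∧ slcp y z = m := by
    obtain ⟨y, hy, z, hz, hyz⟩ := ht
    exact ⟨_, y, hy, z, hz, hyz, rfl⟩
  obtain ⟨y, hy, z, hz, hyz, hmin⟩ := Nat.find_spec hS
  refine ⟨y, Nat.find hS, fun w hw => ?_, ?_⟩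
  · rcases eq_or_ne w y with rfl | hwy
    · rfl
    · exact (pref_eq_iff_le_slcp hwy).2 (Nat.find_min' hS ⟨w, hw, y, hy, hwy, rfl⟩)
  · calc ENNReal.ofReal (c * α ^ Nat.find hS) ≤ edist y z := by
          rw [edist_dist, ← hmin]; exact ENNReal.ofReal_le_ofReal (hlb y z hyz)
      _ ≤ Metric.ediam t := Metric.edist_le_ediam_of_mem hy hz

theorem compactSpace_of_dist_bounds [Finite Ed] (hα0 : 0 < α) (hα1 : α < 1) (hc : 0 < c)
    (hub : ∀ x y : SPath Ed σ τ, x ≠ y → dist x y ≤ α ^ slcp x y)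
    (hlb : ∀ x y : SPath Ed σ τ, x ≠ y → c * α ^ slcp x y ≤ dist x y) :
    CompactSpace (SPath Ed σ τ) := by
  have : CompleteSpace (SPath Ed σ τ) := by
    refine Metric.complete_of_convergent_controlled_sequences (fun N => c * α ^ N)
      (fun N => by positivity) fun u hu => ?_
    have hstable {n i : ℕ} (hi : i < n) : (u n).1 i = (u (i + 1)).1 i :=
      congrFun (pref_eq_of_dist_lt hα0.le hα1.le hc.le hlb (hu (i + 1) n (i + 1) hi le_rfl))
        ⟨i, lt_add_one i⟩
    let x : SPath Ed σ τ := ⟨fun i => (u (i + 1)).1 i, fun i => by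
      have := (u (i + 2)).2 i
      rwa [hstable (lt_add_of_pos_right i two_pos)] at this⟩
    refine ⟨x, tendsto_iff_dist_tendsto_zero.2 <| squeeze_zero (fun _ => dist_nonneg)
      (fun n => dist_le_of_pref_eq hα0.le hα1.le hub (funext fun i => hstable i.2))
      (tendsto_pow_atTop_nhds_zero_of_lt_one hα0.le hα1)⟩
  have : Fintype Ed := Fintype.ofFinite Ed
  refine ⟨(Metric.totallyBounded_of_finite_discretization fun ε hε => ?_).isCompact_of_isClosed
    isClosed_univ⟩
  obtain ⟨k, hk⟩ := exists_pow_lt_of_lt_one hε hα1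
  exact ⟨Fin k → Ed, inferInstance, fun x => pref x.1 k,
    fun x y h => (dist_le_of_pref_eq hα0.le hα1.le hub h).trans_lt hk⟩

end PathMetric

section Covering

variable {V Ed : Type} [Fintype V] [Fintype Ed] [Nonempty V] {σ τ : Ed → V} {ν : V → ℝ} {Λ : ℝ}

theorem one_le_sum_pathMass_of_cover (hΛ : 0 < Λ) (hν : ∀ v, 0 < ν v)
    (hedge : ∀ v, ∑ e with σ e = v, ν (τ e) = Λ * ν v) (hνsum : ∑ v, ν v = 1)
    {κ : Type*} (J : Finset κ) {n : κ → ℕ} (γ : ∀ j, Fin (n j) → Ed)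
    (hcov : ∀ x : SPath Ed σ τ, ∃ j ∈ J, pref x (n j) = γ j) :
    1 ≤ ∑ j ∈ J, pathMass σ τ ν Λ (γ j) := by
  -- Every finite path of length `N` extends to an infinite one, hence starts with some `γ j`.
  set N := J.sup n
  have hmass (δ : Fin N → Ed) := pathMass_nonneg (σ := σ) (τ := τ) hΛ (fun v => (hν v).le) δ
  calc (1 : ℝ) = ∑ δ : Fin N → Ed, pathMass σ τ ν Λ δ := (sum_pathMass hΛ.ne' hedge hνsum N).symm
    _ ≤ ∑ δ : Fin N → Ed, ∑ j ∈ J.attach,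
          if Fin.take (n j) (le_sup j.2) δ = γ j then pathMass σ τ ν Λ δ else 0 := by
        refine sum_le_sum fun δ _ => ?_
        by_cases hδ : IsFinPath σ τ δ
        · obtain ⟨x, rfl⟩ := exists_pref_eq (exists_source_eq hΛ hν hedge) hδ
          obtain ⟨j, hj, hxj⟩ := hcov x
          refine le_of_eq_of_le (if_pos hxj).symm (single_le_sum (f := fun j : J =>
            if Fin.take (n j) (le_sup j.2) (pref x N) = γ j then pathMass σ τ ν Λ (pref x N) else 0)
            (fun j _ => ?_) (mem_attach J ⟨j, hj⟩))
          split_ifs <;> simp [hmass]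
        · simp only [pathMass, hδ, if_false, ite_self, sum_const_zero, le_refl]
    _ = ∑ j ∈ J, pathMass σ τ ν Λ (γ j) := by
        rw [sum_comm, ← sum_attach J]
        exact sum_congr rfl fun j _ => sum_pathMass_take hΛ.ne' hedge hνsum (γ j) (le_sup j.2)

end Covering

section Hausdorff

open MeasureTheory

theorem ediam_rpow_le_iSup_nonempty {X : Type*} [EMetricSpace X] {d : ℝ} (hd : 0 < d)
    (t : Set X) : Metric.ediam t ^ d ≤ ⨆ _ : t.Nonempty, Metric.ediam t ^ d := by
  rcases t.eq_empty_or_nonempty with rfl | ht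
  · simp [ENNReal.zero_rpow_of_pos hd]
  · exact le_iSup_of_le ht le_rfl

/-- A mass distribution principle: `w` is a mass on the open cells `C i`, every set fits in a
cell whose mass is controlled by its diameter, and finite covers by cells have mass `≥ 1`. -/
theorem le_hausdorffMeasure_univ_of_forall_subset {X ι : Type*} [EMetricSpace X]
    [MeasurableSpace X] [BorelSpace X] [CompactSpace X] {d : ℝ} (hd : 0 < d)
    {C : ι → Set X} (hC : ∀ i, IsOpen (C i)) {w : ι → ℝ≥0∞} {a : ℝ≥0∞}
    (hcover : ∀ (J : Finset ℕ) (i : ℕ → ι), Set.univ ⊆ ⋃ j ∈ J, C (i j) → 1 ≤ ∑ j ∈ J, w (i j))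
    (hfine : ∀ (t : Set X) (ε : ℝ≥0∞), ε ≠ 0 → ∃ i, t ⊆ C i ∧ a * w i ≤ Metric.ediam t ^ d + ε) :
    a ≤ μH[d] (Set.univ : Set X) := by
  rw [Measure.hausdorffMeasure_apply]
  refine le_iSup₂_of_le 1 one_pos (le_iInf₂ fun t ht => le_iInf fun _ => ?_)
  refine ENNReal.le_of_forall_pos_le_add fun ε hε _ => ?_
  obtain ⟨ε', hε'0, hε'⟩ := ENNReal.exists_pos_sum_of_countable (ENNReal.coe_ne_zero.2 hε.ne') ℕ
  choose i hti hi using fun j => hfine (t j) (ε' j) (ENNReal.coe_ne_zero.2 (hε'0 j).ne')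
  obtain ⟨J, hJ⟩ := isCompact_univ.elim_finite_subcover (fun j => C (i j)) (fun j => hC _)
    (ht.trans (Set.iUnion_mono hti))
  calc a ≤ a * ∑ j ∈ J, w (i j) := le_mul_of_one_le_right' (hcover J i hJ)
    _ ≤ ∑' j, a * w (i j) := by rw [mul_sum]; exact ENNReal.sum_le_tsum J
    _ ≤ ∑' j, (Metric.ediam (t j) ^ d + ε' j) := ENNReal.tsum_le_tsum hi
    _ ≤ ∑' j, (⨆ _ : (t j).Nonempty, Metric.ediam (t j) ^ d) + ε := by
        rw [ENNReal.tsum_add]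
        exact add_le_add (ENNReal.tsum_le_tsum fun j => ediam_rpow_le_iSup_nonempty hd _) hε'.le

end Hausdorff

section Dimension

open MeasureTheory Filter Topology

variable {V Ed : Type} [Fintype V] [Fintype Ed] [Nonempty V] {σ τ : Ed → V} {ν : V → ℝ}
  {Λ c α : ℝ} {d : ℕ}

theorem ofReal_pow_le_hausdorffMeasure_univ [MetricSpace (SPath Ed σ τ)]
    [MeasurableSpace (SPath Ed σ τ)] [BorelSpace (SPath Ed σ τ)]
    (hedge : ∀ v, ∑ e with σ e = v, ν (τ e) = Λ * ν v) (hνsum : ∑ v, ν v = 1)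
    (hc : 0 < c) (hcν : ∀ v, c ^ d ≤ ν v) (hd : 0 < d)
    (hα0 : 0 < α) (hα1 : α < 1) (hαd : α ^ d = Λ⁻¹)
    (hub : ∀ x y : SPath Ed σ τ, x ≠ y → dist x y ≤ α ^ slcp x y)
    (hlb : ∀ x y : SPath Ed σ τ, x ≠ y → c * α ^ slcp x y ≤ dist x y) :
    ENNReal.ofReal (c ^ d) ≤ μH[d] (Set.univ : Set (SPath Ed σ τ)) := by
  have hΛ : 0 < Λ := inv_pos.1 (hαd ▸ pow_pos hα0 d)
  have hν v : 0 < ν v := (pow_pos hc d).trans_le (hcν v)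
  have hν1 v : ν v ≤ 1 := hνsum ▸ single_le_sum (fun w _ => (hν w).le) (mem_univ v)
  have hout := exists_source_eq hΛ hν hedge
  have : CompactSpace (SPath Ed σ τ) := compactSpace_of_dist_bounds hα0 hα1 hc hub hlb
  have : Nonempty (SPath Ed σ τ) := ⟨(exists_pref_eq hout (γ := Fin.elim0) fun i => i.elim0).choose⟩
  have hmass {n : ℕ} (γ : Fin n → Ed) :
      ENNReal.ofReal (c ^ d) * ENNReal.ofReal (pathMass σ τ ν Λ γ) ≤
        ENNReal.ofReal ((c * α ^ n) ^ d) := by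
    rw [← ENNReal.ofReal_mul (by positivity), mul_pow, pow_pow_eq_inv hαd]
    exact ENNReal.ofReal_le_ofReal
      (mul_le_mul_of_nonneg_left (pathMass_le_inv_pow hΛ hν1 γ) (by positivity))
  refine le_hausdorffMeasure_univ_of_forall_subset (C := fun i : Σ n, Fin n → Ed =>
    pathCylinder σ τ i.2) (w := fun i => ENNReal.ofReal (pathMass σ τ ν Λ i.2)) (by positivity)
    (fun i => isOpen_pathCylinder hα0 hα1.le hc hlb i.2) (fun J i hJ => ?_) fun t ε hε => ?_
  · rw [← ENNReal.ofReal_sum_of_nonneg fun j _ => pathMass_nonneg hΛ (fun v => (hν v).le) _,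
      ENNReal.one_le_ofReal]
    exact one_le_sum_pathMass_of_cover hΛ hν hedge hνsum J _ fun x => by
      simpa [pathCylinder] using hJ (Set.mem_univ x)
  rcases t.subsingleton_or_nontrivial with ht | ht
  · have hlim : Tendsto (fun n => ENNReal.ofReal ((c * α ^ n) ^ d)) atTop (𝓝 0) := by
      rw [← ENNReal.ofReal_zero]
      refine ENNReal.tendsto_ofReal ?_
      simpa [hd.ne'] using ((tendsto_pow_atTop_nhds_zero_of_lt_one hα0.le hα1).const_mul c).pow d
    obtain ⟨n, hn⟩ := (hlim.eventually (gt_mem_nhds (pos_iff_ne_zero.2 hε))).exists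
    obtain ⟨x, hx⟩ := exists_subset_pathCylinder_of_subsingleton ht n
    exact ⟨⟨n, pref x n⟩, hx, (hmass _).trans (hn.le.trans le_add_self)⟩
  · obtain ⟨x, n, hsub, hdiam⟩ := exists_subset_pathCylinder_ofReal_le_ediam hlb ht
    refine ⟨⟨n, pref x n⟩, hsub, (hmass _).trans (le_trans ?_ le_self_add)⟩
    rw [ENNReal.ofReal_pow (by positivity), ← ENNReal.rpow_natCast]
    exact ENNReal.rpow_le_rpow hdiam (Nat.cast_nonneg d)

theorem hausdorffMeasure_univ_le_ofReal_inv [MetricSpace (SPath Ed σ τ)]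
    [MeasurableSpace (SPath Ed σ τ)] [BorelSpace (SPath Ed σ τ)]
    (hedge : ∀ v, ∑ e with σ e = v, ν (τ e) = Λ * ν v) (hνsum : ∑ v, ν v = 1)
    (hc : 0 < c) (hcν : ∀ v, c ^ d ≤ ν v)
    (hα0 : 0 < α) (hα1 : α < 1) (hαd : α ^ d = Λ⁻¹)
    (hub : ∀ x y : SPath Ed σ τ, x ≠ y → dist x y ≤ α ^ slcp x y) :
    μH[d] (Set.univ : Set (SPath Ed σ τ)) ≤ ENNReal.ofReal (c ^ d)⁻¹ := by
  have hΛ : 0 < Λ := inv_pos.1 (hαd ▸ pow_pos hα0 d)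
  have hcd : 0 < c ^ d := pow_pos hc d
  have hcd1 : c ^ d ≤ 1 :=
    (hcν (Classical.arbitrary V)).trans (hνsum ▸ single_le_sum
      (fun w _ => hcd.le.trans (hcν w)) (mem_univ _))
  have hr : Tendsto (fun n => ENNReal.ofReal (α ^ n)) atTop (𝓝 0) := by
    rw [← ENNReal.ofReal_zero]
    exact ENNReal.tendsto_ofReal (tendsto_pow_atTop_nhds_zero_of_lt_one hα0.le hα1)
  refine (Measure.hausdorffMeasure_le_liminf_sum _ _ _ hr
    (fun n (γ : FinPath Ed σ τ n) => pathCylinder σ τ γ.1)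
    (.of_forall fun n γ => ediam_pathCylinder_le hα0.le hα1.le hub γ.1)
    (.of_forall fun n x _ => Set.mem_iUnion.2 ⟨⟨pref x n, isFinPath_pref x n⟩, rfl⟩)).trans ?_
  refine (liminf_le_liminf (.of_forall fun n => ?_)).trans (liminf_const _).le
  calc ∑ γ : FinPath Ed σ τ n, Metric.ediam (pathCylinder σ τ γ.1) ^ (d : ℝ)
      ≤ ∑ γ : FinPath Ed σ τ n, ENNReal.ofReal (endWeight τ ν γ.1 / Λ ^ n / c ^ d) := by
        refine sum_le_sum fun γ _ => ?_
        refine (ENNReal.rpow_le_rpow (ediam_pathCylinder_le hα0.le hα1.le hub γ.1)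
          (Nat.cast_nonneg d)).trans ?_
        rw [ENNReal.rpow_natCast, ← ENNReal.ofReal_pow (by positivity), pow_pow_eq_inv hαd]
        refine ENNReal.ofReal_le_ofReal ?_
        rw [div_right_comm, inv_eq_one_div]
        exact div_le_div_of_nonneg_right ((one_le_div hcd).2 (le_endWeight hcd1 hcν γ.1))
          (by positivity)
    _ = ENNReal.ofReal (c ^ d)⁻¹ := by
        rw [← ENNReal.ofReal_sum_of_nonneg fun γ _ => div_nonneg (div_nonneg
            (hcd.le.trans (le_endWeight hcd1 hcν γ.1)) (by positivity)) hcd.le,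
          ← sum_div, sum_finPath_endWeight_div hΛ.ne' hedge hνsum, one_div]

theorem dimH_univ_eq_of_dist_bounds [MetricSpace (SPath Ed σ τ)]
    (hedge : ∀ v, ∑ e with σ e = v, ν (τ e) = Λ * ν v) (hνsum : ∑ v, ν v = 1)
    (hc : 0 < c) (hcν : ∀ v, c ^ d ≤ ν v) (hd : 0 < d)
    (hα0 : 0 < α) (hα1 : α < 1) (hαd : α ^ d = Λ⁻¹)
    (hub : ∀ x y : SPath Ed σ τ, x ≠ y → dist x y ≤ α ^ slcp x y)
    (hlb : ∀ x y : SPath Ed σ τ, x ≠ y → c * α ^ slcp x y ≤ dist x y) :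
    dimH (Set.univ : Set (SPath Ed σ τ)) = d := by
  borelize (SPath Ed σ τ)
  have hpos : μH[((d : ℝ≥0) : ℝ)] (Set.univ : Set (SPath Ed σ τ)) ≠ 0 := by
    rw [NNReal.coe_natCast]
    exact ((ENNReal.ofReal_pos.2 (pow_pos hc d)).trans_le
      (ofReal_pow_le_hausdorffMeasure_univ hedge hνsum hc hcν hd hα0 hα1 hαd hub hlb)).ne'
  have hfin : μH[((d : ℝ≥0) : ℝ)] (Set.univ : Set (SPath Ed σ τ)) ≠ ⊤ := by
    rw [NNReal.coe_natCast]
    exact ((hausdorffMeasure_univ_le_ofReal_inv hedge hνsum hc hcν hα0 hα1 hαd hub).trans_lt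
      ENNReal.ofReal_lt_top).ne
  simpa using dimH_of_hausdorffMeasure_ne_zero_ne_top hpos hfin

end Dimension

section Weights

variable {V Ed : Type} {τ : Ed → V} {ν : V → ℝ} {W : ∀ n : ℕ, (Fin n → Ed) → ℝ}

theorem weight_eq {Λ d : ℝ} (hΛ : 0 < Λ) (hW0 : ∀ γ : Fin 0 → Ed, W 0 γ = 1)
    (hWs : ∀ (n : ℕ) (γ : Fin (n + 1) → Ed),
      W (n + 1) γ = ν (τ (γ (Fin.last n))) ^ ((1 : ℝ) / d) * Λ ^ (-((n : ℝ) + 1) / d))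
    (n : ℕ) (γ : Fin n → Ed) :
    W n γ = endWeight τ ν γ ^ d⁻¹ * (Λ ^ (-d⁻¹)) ^ n := by
  cases n with
  | zero => simp [hW0, endWeight]
  | succ n =>
    rw [hWs, ← Real.rpow_natCast, ← Real.rpow_mul hΛ.le, one_div]
    congr 2
    push_cast
    ring

variable {α : ℝ} {d : ℕ}

theorem weight_le_pow (hα0 : 0 ≤ α) (hν : ∀ v, 0 ≤ ν v) (hν1 : ∀ v, ν v ≤ 1)
    (hW : ∀ n γ, W n γ = endWeight τ ν γ ^ (d : ℝ)⁻¹ * α ^ n) (n : ℕ) (γ : Fin n → Ed) :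
    W n γ ≤ α ^ n := by
  rw [hW]
  exact mul_le_of_le_one_left (by positivity)
    (Real.rpow_le_one (le_endWeight zero_le_one hν γ) (endWeight_le_one hν1 γ) (by positivity))

theorem mul_pow_le_weight {c : ℝ} (hc : 0 ≤ c) (hd : d ≠ 0) (hcν : ∀ v, c ^ d ≤ ν v)
    (hc1 : c ^ d ≤ 1) (hα0 : 0 ≤ α)
    (hW : ∀ n γ, W n γ = endWeight τ ν γ ^ (d : ℝ)⁻¹ * α ^ n) (n : ℕ) (γ : Fin n → Ed) :
    c * α ^ n ≤ W n γ := by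
  rw [hW, ← Real.pow_rpow_inv_natCast hc hd]
  exact mul_le_mul_of_nonneg_right (Real.rpow_le_rpow (pow_nonneg hc d)
    (le_endWeight hc1 hcν γ) (by positivity)) (pow_nonneg hα0 n)

theorem weight_rpow_eq {Λ : ℝ} (hν : ∀ v, 0 ≤ ν v) (hd : d ≠ 0) (hαd : α ^ d = Λ⁻¹)
    (hW : ∀ n γ, W n γ = endWeight τ ν γ ^ (d : ℝ)⁻¹ * α ^ n) (n : ℕ) (γ : Fin n → Ed) :
    W n γ ^ (d : ℝ) = endWeight τ ν γ / Λ ^ n := by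
  rw [hW, Real.rpow_natCast, mul_pow, pow_pow_eq_inv hαd,
    Real.rpow_inv_natCast_pow (le_endWeight zero_le_one hν γ) hd, div_eq_mul_inv]

end Weights

theorem summable_sum_rpow_of_le_pow {ι : ℕ → Type*} [∀ n, Fintype (ι n)] {f : ∀ n, ι n → ℝ}
    {α s t : ℝ} (hf0 : ∀ n i, 0 ≤ f n i) (hfα : ∀ n i, f n i ≤ α ^ n) (hα0 : 0 ≤ α)
    (hα1 : α < 1) (hs0 : 0 ≤ s) (hs : ∀ n, ∑ i, f n i ^ s ≤ 1) (hst : s < t) :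
    Summable fun n => ∑ i, f n i ^ t := by
  have hterm (n : ℕ) (i : ι n) : f n i ^ t ≤ f n i ^ s * (α ^ (t - s)) ^ n := by
    calc f n i ^ t = f n i ^ s * f n i ^ (t - s) := by
          rw [← Real.rpow_add' (hf0 n i) (by linarith), add_sub_cancel]
      _ ≤ f n i ^ s * (α ^ n) ^ (t - s) := mul_le_mul_of_nonneg_left
          (Real.rpow_le_rpow (hf0 n i) (hfα n i) (by linarith)) (Real.rpow_nonneg (hf0 n i) _)
      _ = f n i ^ s * (α ^ (t - s)) ^ n := by rw [Real.rpow_pow_comm hα0]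
  refine Summable.of_nonneg_of_le (fun n => sum_nonneg fun i _ => Real.rpow_nonneg (hf0 n i) _)
    (fun n => (sum_le_sum fun i _ => hterm n i).trans ?_)
    (summable_geometric_of_lt_one (r := α ^ (t - s)) (by positivity)
      (Real.rpow_lt_one hα0 hα1 (by linarith)))
  rw [← sum_mul]
  exact mul_le_of_le_one_left (by positivity) (hs n)

theorem stmt11_general {V Ed : Type} [Fintype V] [Fintype Ed] [Nonempty V]
    (σ τ : Ed → V)
    (A : Matrix V V ℕ)
    (hA : ∀ v v', A v v' = Nat.card {e : Ed // σ e = v ∧ τ e = v'})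
    (Λ : ℝ) (hΛ : 1 < Λ)
    (ν : V → ℝ) (hν : ∀ v, 0 < ν v) (hνsum : ∑ v, ν v = 1)
    (hPF : (A.map (Nat.cast : ℕ → ℝ)).mulVec ν = Λ • ν)
    (d : ℕ) (hd : 1 ≤ d)
    (W : ∀ n : ℕ, (Fin n → Ed) → ℝ)
    (hW0 : ∀ γ : Fin 0 → Ed, W 0 γ = 1)
    (hWs : ∀ (n : ℕ) (γ : Fin (n + 1) → Ed),
      W (n + 1) γ = ν (τ (γ (Fin.last n))) ^ ((1 : ℝ) / (d : ℝ)) *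
        Λ ^ (-((n : ℝ) + 1) / (d : ℝ)))
    [MetricSpace (SPath Ed σ τ)]
    (hdist : ∀ x y : SPath Ed σ τ, x ≠ y →
      dist x y = W (slcp x y) (fun i : Fin (slcp x y) => x.1 i)) :
    dimH (Set.univ : Set (SPath Ed σ τ)) = (d : ENNReal) ∧
    (∀ t : ℝ, (d : ℝ) < t →
      Summable (fun n : ℕ => ∑' γ : FinPath Ed σ τ n, W n γ.1 ^ t)) ∧
    ¬ Summable (fun n : ℕ => ∑' γ : FinPath Ed σ τ n, W n γ.1 ^ (d : ℝ)) := by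
  have hΛ0 : 0 < Λ := one_pos.trans hΛ
  have hd0 : d ≠ 0 := by omega
  have hν0 v : 0 ≤ ν v := (hν v).le
  have hν1 v : ν v ≤ 1 := hνsum ▸ single_le_sum (fun w _ => hν0 w) (mem_univ v)
  have hedge := sum_filter_source_eq_of_mulVec_eq hA hPF
  obtain ⟨v₀, -, hv₀⟩ := exists_min_image univ ν univ_nonempty
  set α := Λ ^ (-(d : ℝ)⁻¹)
  set c := ν v₀ ^ (d : ℝ)⁻¹
  have hα0 : 0 < α := by positivity
  have hα1 : α < 1 := Real.rpow_lt_one_of_one_lt_of_neg hΛ (by simp; omega)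
  have hαd : α ^ d = Λ⁻¹ := by
    rw [← Real.rpow_natCast, ← Real.rpow_mul hΛ0.le, neg_mul, inv_mul_cancel₀ (by positivity),
      Real.rpow_neg_one]
  have hc : 0 < c := Real.rpow_pos_of_pos (hν v₀) _
  have hcν v : c ^ d ≤ ν v :=
    (Real.rpow_inv_natCast_pow (hν0 v₀) hd0).trans_le (hv₀ v (mem_univ v))
  have hW := weight_eq hΛ0 hW0 hWs
  have hWle := weight_le_pow hα0.le hν0 hν1 hW
  have hWge := mul_pow_le_weight hc.le hd0 hcν ((hcν v₀).trans (hν1 v₀)) hα0.le hW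
  have hzeta n : ∑ γ : FinPath Ed σ τ n, W n γ.1 ^ (d : ℝ) = 1 := by
    simp only [weight_rpow_eq hν0 hd0 hαd hW, sum_finPath_endWeight_div hΛ0.ne' hedge hνsum]
  simp only [tsum_fintype, hzeta]
  refine ⟨dimH_univ_eq_of_dist_bounds hedge hνsum hc hcν (by omega) hα0 hα1 hαd
      (fun x y hxy => (hdist x y hxy).trans_le (hWle _ _))
      (fun x y hxy => (hdist x y hxy).symm ▸ hWge _ _),
    fun t ht => summable_sum_rpow_of_le_pow
      (fun n γ => (by positivity : 0 ≤ c * α ^ n).trans (hWge n γ.1)) (fun n γ => hWle n γ.1) hα0.le hα1 (Nat.cast_nonneg d) (fun n => (hzeta n).le) ht,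
    fun h => one_ne_zero ((summable_const_iff 1).1 h)⟩

/-- The canonical transversal of a primitive substitution tiling of `ℝ^d` (modelled as the
path space of the stationary Bratteli diagram with primitive Abelianization matrix `A`,
Perron–Frobenius eigenvalue `Λ` and normalized positive eigenvector `ν`, with ultrametric
given by the weights `w(γ) = ν_{r(γ)}^{1/d}·Λ^{−|γ|/d}`) has Hausdorff dimension `d`, and
`d` is the abscissa of convergence of its zeta function `ζ(s) = Σ_γ diam([γ])^s`. -/
theorem stmt11 {V Ed : Type} [Fintype V] [Fintype Ed] [Nonempty V] [DecidableEq V]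
    (σ τ : Ed → V)
    (A : Matrix V V ℕ)
    (hA : ∀ v v', A v v' = Nat.card {e : Ed // σ e = v ∧ τ e = v'})
    (hprim : ∃ k : ℕ, ∀ v v', 0 < (A ^ k) v v')
    (Λ : ℝ) (hΛ : 1 < Λ)
    (ν : V → ℝ) (hν : ∀ v, 0 < ν v) (hνsum : ∑ v, ν v = 1)
    (hPF : (A.map (Nat.cast : ℕ → ℝ)).mulVec ν = Λ • ν)
    (d : ℕ) (hd : 1 ≤ d)
    (W : ∀ n : ℕ, (Fin n → Ed) → ℝ)
    (hW0 : ∀ γ : Fin 0 → Ed, W 0 γ = 1)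
    (hWs : ∀ (n : ℕ) (γ : Fin (n + 1) → Ed),
      W (n + 1) γ = ν (τ (γ (Fin.last n))) ^ ((1 : ℝ) / (d : ℝ)) *
        Λ ^ (-((n : ℝ) + 1) / (d : ℝ)))
    [MetricSpace (SPath Ed σ τ)]
    (hdist : ∀ x y : SPath Ed σ τ, x ≠ y →
      dist x y = W (slcp x y) (fun i : Fin (slcp x y) => x.1 i)) :
    dimH (Set.univ : Set (SPath Ed σ τ)) = (d : ENNReal) ∧
    (∀ t : ℝ, (d : ℝ) < t →
      Summable (fun n : ℕ => ∑' γ : FinPath Ed σ τ n, W n γ.1 ^ t)) ∧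
    ¬ Summable (fun n : ℕ => ∑' γ : FinPath Ed σ τ n, W n γ.1 ^ (d : ℝ)) :=
  stmt11_general σ τ A hA Λ hΛ ν hν hνsum hPF d hd W hW0 hWs hdist
end

section
/- The transversal of a primitive substitution tiling of ℝ^d admits a bi-Lipschitz embedding into ℝ^{d+1}. -/
open Finset

section GeometricSeries

variable {X : Type*} [NormedAddCommGroup X] [NormedSpace ℝ X]
  {β D : ℝ} {v : ℕ → X}

lemma norm_pow_smul_le (hβ : 0 ≤ β) (hv : ∀ i, ‖v i‖ ≤ D) (i : ℕ) :
    ‖β ^ i • v i‖ ≤ D * β ^ i := by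
  rw [norm_smul, Real.norm_of_nonneg (pow_nonneg hβ i), mul_comm]
  exact mul_le_mul_of_nonneg_right (hv i) (pow_nonneg hβ i)

lemma summable_pow_smul [CompleteSpace X] (hβ0 : 0 ≤ β) (hβ1 : β < 1) (hv : ∀ i, ‖v i‖ ≤ D) :
    Summable fun i => β ^ i • v i :=
  .of_norm_bounded ((summable_geometric_of_lt_one hβ0 hβ1).mul_left D) (norm_pow_smul_le hβ0 hv)

lemma norm_tsum_pow_smul_le (hβ0 : 0 ≤ β) (hβ1 : β < 1) (hv : ∀ i, ‖v i‖ ≤ D) :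
    ‖∑' i, β ^ i • v i‖ ≤ D * (1 - β)⁻¹ :=
  tsum_of_norm_bounded ((hasSum_geometric_of_lt_one hβ0 hβ1).mul_left D) (norm_pow_smul_le hβ0 hv)

lemma norm_zero_sub_le_norm_tsum_pow_smul [CompleteSpace X] (hβ0 : 0 ≤ β) (hβ1 : β < 1)
    (hv : ∀ i, ‖v i‖ ≤ D) : ‖v 0‖ - β * (D * (1 - β)⁻¹) ≤ ‖∑' i, β ^ i • v i‖ := by
  have hsplit : ∑' i, β ^ i • v i = v 0 + β • ∑' i, β ^ i • v (i + 1) := by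
    simp_rw [(summable_pow_smul hβ0 hβ1 hv).tsum_eq_zero_add, ← tsum_const_smul'', smul_smul,
      pow_succ', pow_zero, one_smul]
  rw [hsplit]
  calc ‖v 0‖ - β * (D * (1 - β)⁻¹) ≤ ‖v 0‖ - ‖β • ∑' i, β ^ i • v (i + 1)‖ := by
        rw [norm_smul, Real.norm_of_nonneg hβ0]
        gcongr
        exact norm_tsum_pow_smul_le hβ0 hβ1 fun i => hv (i + 1)
    _ ≤ ‖v 0 + β • ∑' i, β ^ i • v (i + 1)‖ := norm_sub_le_norm_add _ _

lemma tsum_pow_smul_eq_of_eq_zero [CompleteSpace X] (hβ0 : 0 ≤ β) (hβ1 : β < 1)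
    (hv : ∀ i, ‖v i‖ ≤ D) {j : ℕ} (hj : ∀ i < j, v i = 0) :
    ∑' i, β ^ i • v i = β ^ j • ∑' i, β ^ i • v (i + j) := by
  rw [← (summable_pow_smul hβ0 hβ1 hv).sum_add_tsum_nat_add j,
    sum_eq_zero fun i hi => by rw [hj i (mem_range.1 hi), smul_zero], zero_add,
    ← tsum_const_smul'']
  simp_rw [smul_smul, pow_add, mul_comm]

lemma norm_tsum_pow_smul_mem_Icc [CompleteSpace X] (hβ0 : 0 ≤ β) (hβ1 : β < 1)
    (hv : ∀ i, ‖v i‖ ≤ D) {j : ℕ} (hj : ∀ i < j, v i = 0) :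
    ‖∑' i, β ^ i • v i‖ ∈
      Set.Icc (β ^ j * (‖v j‖ - β * (D * (1 - β)⁻¹))) (β ^ j * (D * (1 - β)⁻¹)) := by
  have hvj : ∀ i, ‖v (i + j)‖ ≤ D := fun i => hv (i + j)
  rw [tsum_pow_smul_eq_of_eq_zero hβ0 hβ1 hv hj, norm_smul, Real.norm_of_nonneg (pow_nonneg hβ0 j)]
  constructor
  · gcongr
    simpa using norm_zero_sub_le_norm_tsum_pow_smul hβ0 hβ1 hvj
  · gcongr
    exact norm_tsum_pow_smul_le hβ0 hβ1 hvj

end GeometricSeries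

noncomputable section DigitSeries

variable {n M : ℕ}

lemma norm_le_sqrt_card_of_abs_le_one (x : EuclideanSpace ℝ (Fin n)) (hx : ∀ k, |x k| ≤ 1) :
    ‖x‖ ≤ √n := by
  rw [EuclideanSpace.norm_eq]
  gcongr
  calc ∑ k, ‖x k‖ ^ 2 ≤ ∑ _k : Fin n, (1 : ℝ) := by
        gcongr with k
        rw [Real.norm_eq_abs, sq_le_one_iff_abs_le_one, abs_abs]
        exact hx k
    _ = n := by simp

def digitVec (M : ℕ) (z : Fin n → Fin M) : EuclideanSpace ℝ (Fin n) :=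
  WithLp.toLp 2 fun k => (z k : ℝ) / M

lemma digitVec_apply_mem_Icc (z : Fin n → Fin M) (k : Fin n) : digitVec M z k ∈ Set.Icc 0 1 := by
  have hM : (0 : ℝ) < M := by exact_mod_cast (z k).pos
  simp only [digitVec, Set.mem_Icc]
  exact ⟨by positivity, (div_le_one hM).2 (by exact_mod_cast (z k).is_lt.le)⟩

lemma norm_digitVec_le (z : Fin n → Fin M) : ‖digitVec M z‖ ≤ √n :=
  norm_le_sqrt_card_of_abs_le_one _ fun k => by
    have hz := digitVec_apply_mem_Icc z k
    rw [abs_of_nonneg hz.1]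
    exact hz.2

lemma norm_digitVec_sub_le (z z' : Fin n → Fin M) : ‖digitVec M z - digitVec M z'‖ ≤ √n :=
  norm_le_sqrt_card_of_abs_le_one _ fun k => by
    have hz := digitVec_apply_mem_Icc z k
    have hz' := digitVec_apply_mem_Icc z' k
    rw [PiLp.sub_apply, abs_le]
    constructor <;> linarith [hz.1, hz.2, hz'.1, hz'.2]

lemma inv_le_norm_digitVec_sub {z z' : Fin n → Fin M} (h : z ≠ z') :
    (M : ℝ)⁻¹ ≤ ‖digitVec M z - digitVec M z'‖ := by
  obtain ⟨k, hk⟩ := Function.ne_iff.1 h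
  have hne : ((z k : ℕ) : ℤ) ≠ (z' k : ℕ) := by exact_mod_cast Fin.val_ne_of_ne hk
  have hone : (1 : ℝ) ≤ |(z k : ℝ) - z' k| := by
    exact_mod_cast Int.one_le_abs (sub_ne_zero.2 hne)
  calc (M : ℝ)⁻¹ ≤ |(z k : ℝ) - z' k| / M := by
        rw [inv_eq_one_div]; gcongr
    _ = ‖(digitVec M z - digitVec M z') k‖ := by
        simp [digitVec, ← sub_div]
    _ ≤ ‖digitVec M z - digitVec M z'‖ := PiLp.norm_apply_le _ k

def digitSeries (β : ℝ) (c : ℕ → Fin n → Fin M) : EuclideanSpace ℝ (Fin n) :=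
  ∑' j, β ^ j • digitVec M (c j)

lemma digitSeries_sub {β : ℝ} (hβ0 : 0 ≤ β) (hβ1 : β < 1) (c c' : ℕ → Fin n → Fin M) :
    digitSeries β c - digitSeries β c' = ∑' i, β ^ i • (digitVec M (c i) - digitVec M (c' i)) := by
  simp_rw [digitSeries, smul_sub]
  exact ((summable_pow_smul hβ0 hβ1 fun i => norm_digitVec_le (c i)).tsum_sub
    (summable_pow_smul hβ0 hβ1 fun i => norm_digitVec_le (c' i))).symm

lemma norm_digitSeries_sub_mem_Icc {β : ℝ} (hβ0 : 0 ≤ β) (hβ : 2 * M * √n * β ≤ 1 - β)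
    {c c' : ℕ → Fin n → Fin M} {j : ℕ} (hlt : ∀ i < j, c i = c' i) (hj : c j ≠ c' j) :
    ‖digitSeries β c - digitSeries β c'‖ ∈
      Set.Icc (β ^ j / (2 * M)) (β ^ j * (√n * (1 - β)⁻¹)) := by
  obtain ⟨k, hk⟩ := Function.ne_iff.1 hj
  have hM : (0 : ℝ) < M := by exact_mod_cast (c j k).pos
  have hn : 0 < √n := Real.sqrt_pos.2 (by exact_mod_cast k.pos)
  have hβ1 : β < 1 := by nlinarith [mul_pos (mul_pos two_pos hM) hn]
  obtain ⟨hlow, hup⟩ := norm_tsum_pow_smul_mem_Icc hβ0 hβ1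
    (fun i => norm_digitVec_sub_le (c i) (c' i)) (j := j) fun i hi => by rw [hlt i hi, sub_self]
  rw [digitSeries_sub hβ0 hβ1]
  refine ⟨le_trans ?_ hlow, hup⟩
  have hsmall : β * (√n * (1 - β)⁻¹) ≤ (2 * (M : ℝ))⁻¹ := by
    rw [← div_eq_mul_inv, ← mul_div_assoc, div_le_iff₀ (by linarith), inv_mul_eq_div,
      le_div_iff₀ (by positivity)]
    linarith
  have hgap : (2 * (M : ℝ))⁻¹ ≤ ‖digitVec M (c j) - digitVec M (c' j)‖ - β * (√n * (1 - β)⁻¹) := by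
    have := inv_le_norm_digitVec_sub hj
    have : (2 * (M : ℝ))⁻¹ + (2 * (M : ℝ))⁻¹ = (M : ℝ)⁻¹ := by field_simp; norm_num
    linarith
  rw [div_eq_mul_inv]
  exact mul_le_mul_of_nonneg_left hgap (pow_nonneg hβ0 j)

end DigitSeries

section RelChain

variable {E : Type*} (r : E → E → Prop)

def IsRelChain {k : ℕ} (g : Fin (k + 1) → E) : Prop :=
  ∀ i : Fin k, r (g i.castSucc) (g i.succ)

variable {r}

lemma isRelChain_snoc {k : ℕ} (g : Fin (k + 1) → E) (e : E) :
    IsRelChain r (Fin.snoc g e : Fin (k + 2) → E) ↔ IsRelChain r g ∧ r (g (Fin.last k)) e := by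
  simp only [IsRelChain, Fin.forall_fin_succ', Fin.snoc_castSucc, Fin.succ_castSucc, Fin.succ_last,
    Fin.snoc_last]

open scoped Classical in
lemma sum_isRelChain_weight_last [Fintype E] {w : E → ℝ} {Λ : ℝ}
    (hw : ∀ e, ∑ e', (if r e e' then w e' else 0) = Λ * w e) (k : ℕ) :
    ∑ g : Fin (k + 1) → E, (if IsRelChain r g then w (g (Fin.last k)) else 0)
      = Λ ^ k * ∑ e, w e := by
  induction k with
  | zero =>
    rw [pow_zero, one_mul]
    exact Fintype.sum_equiv (Equiv.funUnique (Fin 1) E) _ _ fun g => by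
      simp [IsRelChain, Fin.last]
  | succ k ih =>
    rw [← Fintype.sum_equiv (Fin.snocEquiv fun _ => E)
      (fun p => if IsRelChain r (Fin.snoc p.2 p.1 : Fin (k + 2) → E) then w p.1 else 0) _
      fun _ => by simp [Fin.snocEquiv], Fintype.sum_prod_type_right]
    simp only [isRelChain_snoc, ite_and, Finset.sum_ite_irrel, Finset.sum_const_zero, hw]
    simp_rw [← mul_ite_zero, ← Finset.mul_sum, ih, pow_succ', mul_assoc]

open scoped Classical in
lemma card_isRelChain_le [Fintype E] {w : E → ℝ} (hw0 : ∀ e, 0 < w e) {Λ : ℝ}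
    (hw : ∀ e, ∑ e', (if r e e' then w e' else 0) = Λ * w e) (k : ℕ) :
    (Nat.card {g : Fin (k + 1) → E // IsRelChain r g} : ℝ)
      ≤ (∑ e, w e) * (∑ e, (w e)⁻¹) * Λ ^ k := by
  have hone : ∀ e, 1 ≤ w e * ∑ e', (w e')⁻¹ := fun e =>
    calc 1 = w e * (w e)⁻¹ := (mul_inv_cancel₀ (hw0 e).ne').symm
      _ ≤ w e * ∑ e', (w e')⁻¹ := by
          gcongr
          · exact (hw0 e).le
          · exact single_le_sum (fun e' _ => (inv_pos.2 (hw0 e')).le) (mem_univ e)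
  calc (Nat.card {g : Fin (k + 1) → E // IsRelChain r g} : ℝ)
      = ∑ g : Fin (k + 1) → E, if IsRelChain r g then 1 else 0 := by
        rw [Nat.card_eq_fintype_card, Fintype.card_subtype, card_filter]
        push_cast
        rfl
    _ ≤ ∑ g : Fin (k + 1) → E,
          if IsRelChain r g then w (g (Fin.last k)) * ∑ e', (w e')⁻¹ else 0 := by
        gcongr with g
        split_ifs
        exacts [hone _, le_rfl]
    _ = (∑ e, w e) * (∑ e, (w e)⁻¹) * Λ ^ k := by
        simp_rw [← ite_zero_mul, ← sum_mul, sum_isRelChain_weight_last hw]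
        ring

end RelChain

section BratteliDiagram

variable {V Ed : Type} [Fintype V] [Fintype Ed] {σ τ : Ed → V} {A : Matrix V V ℕ}

open scoped Classical in
lemma sum_ite_source_eq_mulVec (hA : ∀ v v', A v v' = Nat.card {e : Ed // σ e = v ∧ τ e = v'})
    (u : V → ℝ) (v : V) :
    ∑ e, (if σ e = v then u (τ e) else 0) = (A.map (Nat.cast : ℕ → ℝ)).mulVec u v := by
  simp only [Matrix.mulVec, dotProduct, Matrix.map_apply, hA, Nat.card_eq_fintype_card,
    Fintype.card_subtype, card_filter]
  rw [← sum_fiberwise univ τ]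
  refine sum_congr rfl fun v' _ => ?_
  push_cast
  rw [sum_mul, sum_filter]
  refine sum_congr rfl fun e _ => ?_
  split_ifs <;> simp_all

open scoped Classical in
lemma sum_ite_composable_eq (hA : ∀ v v', A v v' = Nat.card {e : Ed // σ e = v ∧ τ e = v'})
    {u : V → ℝ} {Λ : ℝ} (hu : (A.map (Nat.cast : ℕ → ℝ)).mulVec u = Λ • u) (e : Ed) :
    ∑ e', (if τ e = σ e' then u (τ e') else 0) = Λ * u (τ e) := by
  simp_rw [eq_comm (a := τ e), sum_ite_source_eq_mulVec hA, hu, Pi.smul_apply, smul_eq_mul]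

lemma exists_card_composable_le (hA : ∀ v v', A v v' = Nat.card {e : Ed // σ e = v ∧ τ e = v'})
    {u : V → ℝ} (hu0 : ∀ v, 0 < u v) {Λ : ℝ} (hΛ : 0 ≤ Λ)
    (hu : (A.map (Nat.cast : ℕ → ℝ)).mulVec u = Λ • u) :
    ∃ C : ℝ, 1 ≤ C ∧ ∀ k : ℕ,
      (Nat.card {g : Fin (k + 1) → Ed // IsRelChain (fun e e' => τ e = σ e') g} : ℝ) ≤ C * Λ ^ k :=
  ⟨max ((∑ e, u (τ e)) * ∑ e, (u (τ e))⁻¹) 1, le_max_right _ _, fun k =>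
    (card_isRelChain_le (fun e => hu0 (τ e)) (sum_ite_composable_eq hA hu) k).trans <| by
      gcongr
      exact le_max_left _ _⟩

end BratteliDiagram

namespace SPath

variable {Ed V : Type} {σ τ : Ed → V}

lemma val_eq_of_lt_slcp {x y : SPath Ed σ τ} {i : ℕ} (h : i < slcp x y) : x.1 i = y.1 i := by
  simpa using Nat.notMem_of_lt_sInf h

lemma val_slcp_ne {x y : SPath Ed σ τ} (h : x ≠ y) : x.1 (slcp x y) ≠ y.1 (slcp x y) :=
  Nat.sInf_mem (s := {n | x.1 n ≠ y.1 n}) <| by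
    by_contra hempty
    exact h (Subtype.ext (funext fun n => by_contra fun hn => hempty ⟨n, hn⟩))

def block (k : ℕ) (x : SPath Ed σ τ) (j : ℕ) :
    {g : Fin (k + 1) → Ed // IsRelChain (fun e e' => τ e = σ e') g} :=
  ⟨fun i => x.1 (j * (k + 1) + i), fun _ => x.2 _⟩

lemma block_eq_of_lt {x y : SPath Ed σ τ} {k i : ℕ} (h : i < slcp x y / (k + 1)) :
    x.block k i = y.block k i := by
  have h' : (i + 1) * (k + 1) ≤ slcp x y := (Nat.le_div_iff_mul_le k.succ_pos).1 h
  refine Subtype.ext (funext fun t => val_eq_of_lt_slcp ?_)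
  rw [Nat.succ_mul] at h'
  omega

lemma block_slcp_div_ne {x y : SPath Ed σ τ} (h : x ≠ y) (k : ℕ) :
    x.block k (slcp x y / (k + 1)) ≠ y.block k (slcp x y / (k + 1)) := fun heq => by
  have := congrFun (congrArg Subtype.val heq) ⟨slcp x y % (k + 1), Nat.mod_lt _ k.succ_pos⟩
  simp only [block, Nat.div_add_mod'] at this
  exact val_slcp_ne h this

lemma dist_mem_Icc_of_slcp [PseudoMetricSpace (SPath Ed σ τ)] {a : SPath Ed σ τ → ℕ → ℝ}
    {α a₁ a₂ : ℝ} (hα0 : 0 ≤ α) (hα1 : α ≤ 1) (ha₁ : 0 ≤ a₁) (hab : ∀ x n, a x n ∈ Set.Icc a₁ a₂)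
    (hdist : ∀ x y : SPath Ed σ τ, x ≠ y → dist x y = a x (slcp x y) * α ^ slcp x y)
    {x y : SPath Ed σ τ} (hxy : x ≠ y) (k : ℕ) :
    a₁ * α ^ k * (α ^ (k + 1)) ^ (slcp x y / (k + 1)) ≤ dist x y ∧
      dist x y ≤ a₂ * (α ^ (k + 1)) ^ (slcp x y / (k + 1)) := by
  have hlo : α ^ k * (α ^ (k + 1)) ^ (slcp x y / (k + 1)) ≤ α ^ slcp x y := by
    rw [← pow_mul, ← pow_add]
    refine pow_le_pow_of_le_one hα0 hα1 ?_
    have := Nat.div_add_mod (slcp x y) (k + 1)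
    have := Nat.mod_lt (slcp x y) (by omega : 0 < k + 1)
    omega
  have hhi : α ^ slcp x y ≤ (α ^ (k + 1)) ^ (slcp x y / (k + 1)) := by
    rw [← pow_mul]
    exact pow_le_pow_of_le_one hα0 hα1 (Nat.mul_div_le _ _)
  obtain ⟨ha₁x, hxa₂⟩ := hab x (slcp x y)
  rw [hdist x y hxy, mul_assoc]
  exact ⟨mul_le_mul ha₁x hlo (by positivity) (ha₁.trans ha₁x),
    mul_le_mul hxa₂ hhi (by positivity) ((ha₁.trans ha₁x).trans hxa₂)⟩

end SPath

lemma Real.rpow_neg_natCast_div_eq_pow {Λ : ℝ} (hΛ : 0 ≤ Λ) (s d : ℕ) :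
    Λ ^ (-(s : ℝ) / d) = (Λ ^ (-1 / d : ℝ)) ^ s := by
  rw [← Real.rpow_natCast, ← Real.rpow_mul hΛ]
  ring_nf

lemma Real.mul_rpow_neg_one_div_pow {Λ : ℝ} (hΛ : 0 < Λ) {d : ℕ} (hd : d ≠ 0) :
    Λ * (Λ ^ (-1 / d : ℝ)) ^ d = 1 := by
  rw [← Real.rpow_neg_natCast_div_eq_pow hΛ.le, neg_div, div_self (by exact_mod_cast hd),
    Real.rpow_neg_one, mul_inv_cancel₀ hΛ.ne']

/-- Take `k = (d + 1) p` and `M = ⌈C Λ ^ p⌉`: since `Λ α ^ d = 1`, `M α ^ (k + 1) ≤ 2 C α ^ p`,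
which is small for large `p`. -/
lemma exists_blockLength_digitBase {α Λ C : ℝ} {d : ℕ} (hα0 : 0 < α) (hα1 : α < 1)
    (hΛα : Λ * α ^ d = 1) (hC : 1 ≤ C) :
    ∃ k M : ℕ, 0 < M ∧ C * Λ ^ k ≤ (M : ℝ) ^ (d + 1) ∧
      2 * M * √(↑(d + 1)) * α ^ (k + 1) ≤ 1 - α ^ (k + 1) := by
  set R := √(↑(d + 1) : ℝ)
  have hR : 0 < R := Real.sqrt_pos.2 (by positivity)
  have hαd : α ^ d ≤ 1 := pow_le_one₀ hα0.le hα1.le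
  have hΛ1 : 1 ≤ Λ := by nlinarith [pow_pos hα0 d]
  obtain ⟨p, hp⟩ := exists_pow_lt_of_lt_one (show 0 < (1 - α) / (4 * C * R) by
    have : 0 < 1 - α := by linarith
    positivity) hα1
  have hCΛ : 1 ≤ C * Λ ^ p := one_le_mul_of_one_le_of_one_le hC (one_le_pow₀ hΛ1)
  refine ⟨(d + 1) * p, ⌈C * Λ ^ p⌉₊, Nat.ceil_pos.2 (by linarith), ?_, ?_⟩
  · calc C * Λ ^ ((d + 1) * p) ≤ C ^ (d + 1) * (Λ ^ p) ^ (d + 1) := by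
          rw [← pow_mul, mul_comm p]
          gcongr
          exact le_self_pow₀ hC (by omega)
      _ = (C * Λ ^ p) ^ (d + 1) := (mul_pow _ _ _).symm
      _ ≤ (⌈C * Λ ^ p⌉₊ : ℝ) ^ (d + 1) := by gcongr; exact Nat.le_ceil _
  · have hM : (⌈C * Λ ^ p⌉₊ : ℝ) ≤ 2 * (C * Λ ^ p) :=
      (Nat.ceil_lt_add_one (by positivity)).le.trans (by linarith)
    have hscale : Λ ^ p * α ^ ((d + 1) * p + 1) = α ^ p * α := by
      rw [pow_succ, pow_mul, ← mul_assoc, ← mul_pow, pow_succ, ← mul_assoc, hΛα, one_mul]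
    have hpow : α ^ ((d + 1) * p + 1) ≤ α := pow_le_of_le_one hα0.le hα1.le (by omega)
    have hp' : 4 * C * R * α ^ p < 1 - α := by
      rwa [lt_div_iff₀ (by positivity), mul_comm] at hp
    calc 2 * ⌈C * Λ ^ p⌉₊ * R * α ^ ((d + 1) * p + 1)
        ≤ 2 * (2 * (C * Λ ^ p)) * R * α ^ ((d + 1) * p + 1) := by gcongr
      _ = 4 * C * R * (Λ ^ p * α ^ ((d + 1) * p + 1)) := by ring
      _ = 4 * C * R * α ^ p * α := by rw [hscale]; ring
      _ ≤ 4 * C * R * α ^ p := mul_le_of_le_one_right (by positivity) hα1.le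
      _ ≤ 1 - α ^ ((d + 1) * p + 1) := by linarith

lemma exists_biLipschitz_digitSeries {X : Type*} [PseudoMetricSpace X] {n M : ℕ} (hM : 0 < M)
    {β b₁ b₂ : ℝ} (hβ0 : 0 ≤ β) (hβ : 2 * M * √n * β ≤ 1 - β) (hb₁ : 0 < b₁) (hb₂ : 0 < b₂)
    (c : X → ℕ → Fin n → Fin M)
    (hc : ∀ x y, x ≠ y → ∃ j, (∀ i < j, c x i = c y i) ∧ c x j ≠ c y j ∧
      b₁ * β ^ j ≤ dist x y ∧ dist x y ≤ b₂ * β ^ j) :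
    ∃ cm cp : ℝ, 0 < cm ∧ cm ≤ cp ∧ ∀ x y,
      cm * dist x y ≤ dist (digitSeries β (c x)) (digitSeries β (c y)) ∧
        dist (digitSeries β (c x)) (digitSeries β (c y)) ≤ cp * dist x y := by
  refine ⟨(2 * M * b₂)⁻¹, max (2 * M * b₂)⁻¹ (√n * (1 - β)⁻¹ / b₁), by positivity,
    le_max_left _ _, fun x y => ?_⟩
  rcases eq_or_ne x y with rfl | hxy
  · simp
  obtain ⟨j, hlt, hj, hlo, hhi⟩ := hc x y hxy
  obtain ⟨hFlo, hFhi⟩ := norm_digitSeries_sub_mem_Icc hβ0 hβ hlt hj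
  rw [dist_eq_norm]
  constructor
  · calc (2 * M * b₂)⁻¹ * dist x y ≤ (2 * M * b₂)⁻¹ * (b₂ * β ^ j) := by gcongr
      _ = β ^ j / (2 * M) := by field_simp
      _ ≤ _ := hFlo
  · calc _ ≤ β ^ j * (√n * (1 - β)⁻¹) := hFhi
      _ = √n * (1 - β)⁻¹ / b₁ * (b₁ * β ^ j) := by field_simp
      _ ≤ _ := by gcongr; exact le_max_right _ _

theorem stmt12_general {V Ed : Type} [Fintype V] [Fintype Ed]
    (σ τ : Ed → V)
    (A : Matrix V V ℕ)
    (hA : ∀ v v', A v v' = Nat.card {e : Ed // σ e = v ∧ τ e = v'})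
    (Λ : ℝ) (hΛ : 1 < Λ)
    (hPF : ∃ u : V → ℝ, (∀ v, 0 < u v) ∧ (A.map (Nat.cast : ℕ → ℝ)).mulVec u = Λ • u)
    (d : ℕ) (hd : 1 ≤ d)
    (a : SPath Ed σ τ → ℕ → ℝ) (a₁ a₂ : ℝ) (ha₁ : 0 < a₁)
    (hab : ∀ x n, a x n ∈ Set.Icc a₁ a₂)
    [MetricSpace (SPath Ed σ τ)]
    (hdist : ∀ x y : SPath Ed σ τ, x ≠ y →
      dist x y = a x (slcp x y) * Λ ^ (-(slcp x y : ℝ) / (d : ℝ))) :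
    ∃ F : SPath Ed σ τ → EuclideanSpace ℝ (Fin (d + 1)),
      ∃ cm cp : ℝ, 0 < cm ∧ cm ≤ cp ∧
        ∀ x y, cm * dist x y ≤ dist (F x) (F y) ∧ dist (F x) (F y) ≤ cp * dist x y := by
  rcases isEmpty_or_nonempty (SPath Ed σ τ) with _ | ⟨⟨x₀⟩⟩
  · exact ⟨0, 1, 1, one_pos, le_rfl, fun x => isEmptyElim x⟩
  obtain ⟨u, hu0, hu⟩ := hPF
  obtain ⟨C, hC, hcard⟩ := exists_card_composable_le hA hu0 (by linarith) hu
  set α := Λ ^ (-1 / d : ℝ)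
  have hα0 : 0 < α := Real.rpow_pos_of_pos (by linarith) _
  have hα1 : α < 1 := Real.rpow_lt_one_of_one_lt_of_neg hΛ
    (div_neg_of_neg_of_pos (by norm_num) (by exact_mod_cast hd))
  obtain ⟨k, M, hM, hCM, hβ⟩ := exists_blockLength_digitBase hα0 hα1
    (Real.mul_rpow_neg_one_div_pow (by linarith) (by omega)) hC
  obtain ⟨ι⟩ : Nonempty ({g : Fin (k + 1) → Ed // IsRelChain (fun e e' => τ e = σ e') g} ↪
      (Fin (d + 1) → Fin M)) := by
    classical
    refine Function.Embedding.nonempty_of_card_le ?_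
    rw [← Nat.card_eq_fintype_card, Fintype.card_fun, Fintype.card_fin, Fintype.card_fin]
    exact_mod_cast (hcard k).trans hCM
  have hdist' : ∀ x y : SPath Ed σ τ, x ≠ y → dist x y = a x (slcp x y) * α ^ slcp x y :=
    fun x y hxy => by rw [hdist x y hxy, Real.rpow_neg_natCast_div_eq_pow (by linarith)]
  obtain ⟨cm, cp, hcm, hcp, hF⟩ := exists_biLipschitz_digitSeries hM (pow_nonneg hα0.le _) hβ
    (by positivity) ((ha₁.trans_le (hab x₀ 0).1).trans_le (hab x₀ 0).2) (fun x j => ι (x.block k j))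
    fun x y hxy => ⟨_, fun i hi => congrArg ι (SPath.block_eq_of_lt hi),
      ι.injective.ne (SPath.block_slcp_div_ne hxy k),
      SPath.dist_mem_Icc_of_slcp hα0.le hα1.le ha₁.le hab hdist' hxy k⟩
  exact ⟨_, cm, cp, hcm, hcp, hF⟩

/-- The transversal of a primitive substitution tiling of `ℝ^d` (modelled as the path space
of the stationary Bratteli diagram of the substitution, with primitive adjacency matrix `A`,
Perron–Frobenius eigenvalue `Λ`, and self-similar ultrametric with parameter `α = Λ^{-1/d}`
and weights `a_γ` uniformly bounded away from `0` and `∞`) admits a bi-Lipschitz embedding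
into `ℝ^{d+1}`. -/
theorem stmt12 {V Ed : Type} [Fintype V] [Fintype Ed] [Nonempty V] [DecidableEq V]
    (σ τ : Ed → V)
    (A : Matrix V V ℕ)
    (hA : ∀ v v', A v v' = Nat.card {e : Ed // σ e = v ∧ τ e = v'})
    (hprim : ∃ k : ℕ, ∀ v v', 0 < (A ^ k) v v')
    (Λ : ℝ) (hΛ : 1 < Λ)
    (hPF : ∃ u : V → ℝ, (∀ v, 0 < u v) ∧ (A.map (Nat.cast : ℕ → ℝ)).mulVec u = Λ • u)
    (d : ℕ) (hd : 1 ≤ d)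
    (a : SPath Ed σ τ → ℕ → ℝ) (a₁ a₂ : ℝ) (ha₁ : 0 < a₁)
    (hab : ∀ x n, a x n ∈ Set.Icc a₁ a₂)
    (hagree : ∀ x y : SPath Ed σ τ, ∀ n, (∀ i < n, x.1 i = y.1 i) → a x n = a y n)
    [MetricSpace (SPath Ed σ τ)]
    (hdist : ∀ x y : SPath Ed σ τ, x ≠ y →
      dist x y = a x (slcp x y) * Λ ^ (-(slcp x y : ℝ) / (d : ℝ))) :
    ∃ F : SPath Ed σ τ → EuclideanSpace ℝ (Fin (d + 1)),
      ∃ cm cp : ℝ, 0 < cm ∧ cm ≤ cp ∧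
        ∀ x y, cm * dist x y ≤ dist (F x) (F y) ∧ dist (F x) (F y) ≤ cp * dist x y :=
  stmt12_general σ τ A hA Λ hΛ hPF d hd a a₁ a₂ ha₁ hab hdist
end

section
/- Let E be a finite alphabet, α ∈ (0,1), and β : E → (0,∞) injective with δ_min = min_{e≠f}|β(e)−β(f)| and δ_max = max_{e,f}|β(e)−β(f)|. For s > 0 define φ_s : E^ℕ → ℝ by φ_s(x) = Σ_{j≥0} β(x_j)·α^{sj}. Then for all x,y, |φ_s(x) − φ_s(y)| ≤ (δ_max/(1−α^s))·ρ(x,y)^s, where ρ(x,y) = α^{|x∧y|}. Moreover, if s > log(δ_min/(δ_min+δ_max))/log(α), then also |φ_s(x) − φ_s(y)| ≥ c₋·ρ(x,y)^s with c₋ = (δ_min − α^s(δ_min+δ_max))/(1−α^s) > 0; hence φ_s is a bi-Hölder embedding of (E^ℕ, ρ) into ℝ. -/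
open Classical

/-- The length of the longest common prefix of two sequences. -/
noncomputable def lcp {E : Type*} (x y : ℕ → E) : ℕ := sInf {n | x n ≠ y n}

/-- The self-similar ultrametric `ρ(x,y) = α^{|x∧y|}` on `E^ℕ`. -/
noncomputable def rho {E : Type*} (α : ℝ) (x y : ℕ → E) : ℝ :=
  if x = y then 0 else α ^ lcp x y

/-- The Hölder embedding `φ_s(x) = Σ_{j≥0} β(x_j)·α^{sj}` of `E^ℕ` into `ℝ`. -/
noncomputable def phiS {E : Type*} (α s : ℝ) (β : E → ℝ) (x : ℕ → E) : ℝ :=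
  ∑' j : ℕ, β (x j) * (α ^ s) ^ j

/-!
Writing `r = α^s` and `n = |x∧y|`, the first `n` terms of `φ_s(x) - φ_s(y)` cancel, so
`φ_s(x) - φ_s(y) = r^n (d₀ + d₁ r + d₂ r² + ⋯)` with `dⱼ = β(x_{n+j}) - β(y_{n+j})`. Every `|dⱼ|` is
at most `δ_max` and `|d₀| ≥ δ_min`, so the series in parentheses has absolute value at most
`δ_max/(1-r)` and at least `δ_min - δ_max r/(1-r)`, which is positive exactly when
`r < δ_min/(δ_min+δ_max)`. Since `ρ(x,y)^s = r^n`, these are the two Hölder bounds.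
-/

section PowerSeries

variable {c : ℕ → ℝ} {r M : ℝ}

lemma summable_mul_pow_of_abs_le (hr0 : 0 ≤ r) (hr1 : r < 1) (hc : ∀ j, |c j| ≤ M) :
    Summable fun j => c j * r ^ j := by
  refine Summable.of_norm_bounded ((summable_geometric_of_lt_one hr0 hr1).mul_left M) fun j => ?_
  rw [Real.norm_eq_abs, abs_mul, abs_pow, abs_of_nonneg hr0]
  exact mul_le_mul_of_nonneg_right (hc j) (pow_nonneg hr0 j)

lemma abs_tsum_mul_pow_le (hr0 : 0 ≤ r) (hr1 : r < 1) (hc : ∀ j, |c j| ≤ M) :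
    |∑' j, c j * r ^ j| ≤ M / (1 - r) := by
  rw [← Real.norm_eq_abs]
  refine tsum_of_norm_bounded ((hasSum_geometric_of_lt_one hr0 hr1).mul_left M) fun j => ?_
  rw [Real.norm_eq_abs, abs_mul, abs_pow, abs_of_nonneg hr0]
  exact mul_le_mul_of_nonneg_right (hc j) (pow_nonneg hr0 j)

lemma tsum_mul_pow_eq_sum_add (hc : Summable fun j => c j * r ^ j) (n : ℕ) :
    ∑' j, c j * r ^ j =
      ∑ j ∈ Finset.range n, c j * r ^ j + r ^ n * ∑' j, c (j + n) * r ^ j := by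
  rw [← hc.sum_add_tsum_nat_add n, ← tsum_mul_left]
  congr 1
  exact tsum_congr fun j => by rw [pow_add]; ring

lemma le_abs_tsum_mul_pow (hr0 : 0 ≤ r) (hr1 : r < 1) (hc : ∀ j, |c j| ≤ M) {m : ℝ}
    (hc0 : m ≤ |c 0|) :
    (m - r * (m + M)) / (1 - r) ≤ |∑' j, c j * r ^ j| := by
  have htail : |∑' j, c (j + 1) * r ^ j| ≤ M / (1 - r) :=
    abs_tsum_mul_pow_le hr0 hr1 fun j => hc (j + 1)
  have hsplit : ∑' j, c j * r ^ j = c 0 + r * ∑' j, c (j + 1) * r ^ j := by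
    simpa using tsum_mul_pow_eq_sum_add (summable_mul_pow_of_abs_le hr0 hr1 hc) 1
  have h1r : 0 < 1 - r := sub_pos.2 hr1
  calc (m - r * (m + M)) / (1 - r) = m - r * (M / (1 - r)) := by field_simp; ring
    _ ≤ |c 0| - r * |∑' j, c (j + 1) * r ^ j| := by gcongr
    _ = |c 0| - |r * ∑' j, c (j + 1) * r ^ j| := by rw [abs_mul, abs_of_nonneg hr0]
    _ ≤ |∑' j, c j * r ^ j| := by rw [hsplit]; exact abs_sub_abs_le_abs_add _ _

end PowerSeries

section Sequences

variable {E : Type*} {x y : ℕ → E}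

lemma apply_lcp_ne (hxy : x ≠ y) : x (lcp x y) ≠ y (lcp x y) :=
  Nat.sInf_mem (Function.ne_iff.mp hxy)

lemma apply_eq_of_lt_lcp {k : ℕ} (hk : k < lcp x y) : x k = y k := by
  by_contra h
  exact (Nat.sInf_le h).not_gt hk

lemma rho_self (α : ℝ) (x : ℕ → E) : rho α x x = 0 := if_pos rfl

lemma rho_rpow_of_ne {α : ℝ} (hα : 0 ≤ α) (s : ℝ) (hxy : x ≠ y) :
    rho α x y ^ s = (α ^ s) ^ lcp x y := by
  rw [rho, if_neg hxy, ← Real.rpow_natCast, ← Real.rpow_natCast, ← Real.rpow_mul hα,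
    ← Real.rpow_mul hα, mul_comm]

end Sequences

section HolderEmbedding

variable {E : Type*} {α s δ : ℝ} {β : E → ℝ}

lemma summable_phiS (hr0 : 0 ≤ α ^ s) (hr1 : α ^ s < 1) (hβ : ∀ e f, |β e - β f| ≤ δ)
    (x : ℕ → E) : Summable fun j => β (x j) * (α ^ s) ^ j := by
  refine summable_mul_pow_of_abs_le hr0 hr1 (M := |β (x 0)| + δ) fun j => ?_
  calc |β (x j)| = |β (x 0) + (β (x j) - β (x 0))| := by ring_nf
    _ ≤ |β (x 0)| + δ := (abs_add_le _ _).trans (add_le_add_right (hβ _ _) _)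

lemma phiS_sub_phiS (hr0 : 0 ≤ α ^ s) (hr1 : α ^ s < 1) (hβ : ∀ e f, |β e - β f| ≤ δ)
    (x y : ℕ → E) :
    phiS α s β x - phiS α s β y = (α ^ s) ^ lcp x y *
      ∑' j, (β (x (j + lcp x y)) - β (y (j + lcp x y))) * (α ^ s) ^ j := by
  have hsum := (summable_phiS hr0 hr1 hβ x).sub (summable_phiS hr0 hr1 hβ y)
  simp only [← sub_mul] at hsum
  rw [phiS, phiS, ← (summable_phiS hr0 hr1 hβ x).tsum_sub (summable_phiS hr0 hr1 hβ y)]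
  simp only [← sub_mul]
  rw [tsum_mul_pow_eq_sum_add hsum (lcp x y), Finset.sum_eq_zero, zero_add]
  intro j hj
  rw [apply_eq_of_lt_lcp (Finset.mem_range.mp hj), sub_self, zero_mul]

lemma abs_phiS_sub_le (hr0 : 0 ≤ α ^ s) (hr1 : α ^ s < 1) (hβ : ∀ e f, |β e - β f| ≤ δ)
    (x y : ℕ → E) :
    |phiS α s β x - phiS α s β y| ≤ δ / (1 - α ^ s) * (α ^ s) ^ lcp x y := by
  rw [phiS_sub_phiS hr0 hr1 hβ, abs_mul, abs_pow, abs_of_nonneg hr0, mul_comm]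
  gcongr
  exact abs_tsum_mul_pow_le hr0 hr1 fun j => hβ _ _

lemma le_abs_phiS_sub {δmin : ℝ} (hr0 : 0 ≤ α ^ s) (hr1 : α ^ s < 1)
    (hβ : ∀ e f, |β e - β f| ≤ δ) (hβmin : ∀ e f, e ≠ f → δmin ≤ |β e - β f|)
    {x y : ℕ → E} (hxy : x ≠ y) :
    (δmin - α ^ s * (δmin + δ)) / (1 - α ^ s) * (α ^ s) ^ lcp x y ≤
      |phiS α s β x - phiS α s β y| := by
  rw [phiS_sub_phiS hr0 hr1 hβ, abs_mul, abs_pow, abs_of_nonneg hr0, mul_comm]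
  gcongr
  refine le_abs_tsum_mul_pow hr0 hr1 (fun j => hβ _ _) (hβmin _ _ ?_)
  simpa using apply_lcp_ne hxy

end HolderEmbedding

lemma rpow_mul_add_lt_of_log_div_log_lt {α s a b : ℝ} (hα0 : 0 < α) (hα1 : α < 1) (ha : 0 < a)
    (hs : Real.log (a / (a + b)) / Real.log α < s) :
    α ^ s * (a + b) < a := by
  rcases le_or_gt (a + b) 0 with hab | hab
  · nlinarith [Real.rpow_pos_of_pos hα0 s]
  have hlog : Real.log (α ^ s) < Real.log (a / (a + b)) := by
    rw [Real.log_rpow hα0]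
    exact (div_lt_iff_of_neg (Real.log_neg hα0 hα1)).mp hs
  have := (Real.log_lt_log_iff (Real.rpow_pos_of_pos hα0 s) (div_pos ha hab)).mp hlog
  exact (lt_div_iff₀ hab).mp this

theorem stmt13_general {E : Type*} (α : ℝ) (hα : α ∈ Set.Ioo (0 : ℝ) 1)
    (s : ℝ) (hs : 0 < s)
    (β : E → ℝ)
    (δmin δmax : ℝ) (hδminpos : 0 < δmin)
    (hδmin : ∀ e f : E, e ≠ f → δmin ≤ |β e - β f|)
    (hδmax : ∀ e f : E, |β e - β f| ≤ δmax) :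
    (∀ x y : ℕ → E,
      |phiS α s β x - phiS α s β y| ≤ δmax / (1 - α ^ s) * rho α x y ^ s) ∧
    (Real.log (δmin / (δmin + δmax)) / Real.log α < s →
      0 < (δmin - α ^ s * (δmin + δmax)) / (1 - α ^ s) ∧
      (∀ x y : ℕ → E,
        (δmin - α ^ s * (δmin + δmax)) / (1 - α ^ s) * rho α x y ^ s ≤
          |phiS α s β x - phiS α s β y|) ∧
      Function.Injective (phiS α s β)) := by
  obtain ⟨hα0, hα1⟩ := hα
  have hr0 : 0 ≤ α ^ s := Real.rpow_nonneg hα0.le s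
  have hr1 : α ^ s < 1 := Real.rpow_lt_one hα0.le hα1 hs
  have hρ0 (x : ℕ → E) : rho α x x ^ s = 0 := by rw [rho_self, Real.zero_rpow hs.ne']
  refine ⟨fun x y => ?_, fun hcond => ?_⟩
  · rcases eq_or_ne x y with rfl | hxy
    · simp [hρ0]
    · rw [rho_rpow_of_ne hα0.le s hxy]
      exact abs_phiS_sub_le hr0 hr1 hδmax x y
  have hc : 0 < (δmin - α ^ s * (δmin + δmax)) / (1 - α ^ s) :=
    div_pos (sub_pos.2 (rpow_mul_add_lt_of_log_div_log_lt hα0 hα1 hδminpos hcond))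
      (sub_pos.2 hr1)
  refine ⟨hc, fun x y => ?_, fun x y hφ => by_contra fun hxy => ?_⟩
  · rcases eq_or_ne x y with rfl | hxy
    · simp [hρ0]
    · rw [rho_rpow_of_ne hα0.le s hxy]
      exact le_abs_phiS_sub hr0 hr1 hδmax hδmin hxy
  · have h := le_abs_phiS_sub hr0 hr1 hδmax hδmin hxy
    rw [hφ, sub_self, abs_zero] at h
    exact h.not_gt (mul_pos hc (pow_pos (Real.rpow_pos_of_pos hα0 s) _))

/-- Hölder estimates for `φ_s`: always `|φ_s(x) − φ_s(y)| ≤ (δ_max/(1−α^s))·ρ(x,y)^s`, and if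
`s > log(δ_min/(δ_min+δ_max))/log α` then also the lower bound with
`c₋ = (δ_min − α^s(δ_min+δ_max))/(1−α^s) > 0`; hence `φ_s` is a bi-Hölder embedding of
`(E^ℕ, ρ)` into `ℝ`. -/
theorem stmt13 {E : Type*} [Fintype E] (α : ℝ) (hα : α ∈ Set.Ioo (0 : ℝ) 1)
    (s : ℝ) (hs : 0 < s)
    (β : E → ℝ) (hβpos : ∀ e, 0 < β e) (hβinj : Function.Injective β)
    (δmin δmax : ℝ) (hδminpos : 0 < δmin)
    (hδmin : ∀ e f : E, e ≠ f → δmin ≤ |β e - β f|)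
    (hδmax : ∀ e f : E, |β e - β f| ≤ δmax) :
    (∀ x y : ℕ → E,
      |phiS α s β x - phiS α s β y| ≤ δmax / (1 - α ^ s) * rho α x y ^ s) ∧
    (Real.log (δmin / (δmin + δmax)) / Real.log α < s →
      0 < (δmin - α ^ s * (δmin + δmax)) / (1 - α ^ s) ∧
      (∀ x y : ℕ → E,
        (δmin - α ^ s * (δmin + δmax)) / (1 - α ^ s) * rho α x y ^ s ≤
          |phiS α s β x - phiS α s β y|) ∧
      Function.Injective (phiS α s β)) :=
  stmt13_general α hα s hs β δmin δmax hδminpos hδmin hδmax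
end
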